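/- arXiv:1907.04844 — 13 statements merged into one kernel-verified Lean document; each statement's English description precedes it below -/
import Mathlib

section
/- Let x, y, c be positive integers with y < x, and set n = c·x and m = c·y. For every j ∈ {0,…,m−1}, the number of integers i ∈ {0,…,n−1} such that ⌈i·y/x⌉ ≡ j (mod m) equals ⌊j·x/y⌋ − ⌊(j−1)·x/y⌋. Moreover, this count depends only on the residue of j modulo y: ⌊j·x/y⌋ − ⌊(j−1)·x/y⌋ = ⌊r·x/y⌋ − ⌊(r−1)·x/y⌋, where r = j mod y. -/
/-!
Write `f i = ⌈i y / x⌉`. Since `n y = x m`, we have `f (i + n) = f i + m`, so the number of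
`i` in a window of `n` consecutive integers with `f i ≡ j (mod m)` does not depend on the
window. On the window `1, …, n` the values of `f` lie in `1, …, m`, so the condition
becomes `f i = k` for the representative `k ∈ (0, m]` of `j`, and `f i = k` means
`⌊(k - 1) x / y⌋ < i ≤ ⌊k x / y⌋`. Finally `⌊j x / y⌋ - ⌊(j - 1) x / y⌋` is `y`-periodic in
`j`, as adding `y` to `j` adds the integer `x` to both floors; this gives the second claim
and replaces `k` by `j` in the first.
-/

open scoped Classical

/-- Ceiling division on natural numbers: `ceilDiv p q = ⌈p / q⌉` for `q > 0`. -/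
def ceilDiv (p q : ℕ) : ℕ := (p + q - 1) / q

open Finset

section FloorDifference

variable {α : Type*} [Field α] [LinearOrder α] [IsStrictOrderedRing α] [FloorRing α]

theorem periodic_floor_mul_div_sub_floor (x : ℕ) {y : ℕ} (hy : y ≠ 0) :
    Function.Periodic (fun j : ℕ => ⌊(j : α) * x / y⌋ - ⌊((j : α) - 1) * x / y⌋) y := by
  intro j
  have hy' : (y : α) ≠ 0 := Nat.cast_ne_zero.2 hy
  have shift (t : α) : (t + y) * x / y = t * x / y + x := by field_simp
  simp only [Nat.cast_add, add_sub_right_comm _ (y : α), shift, Int.floor_add_natCast]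
  ring

theorem floor_mul_div_sub_floor_eq_natCast {k : ℕ} (hk : 0 < k) (x y : ℕ) :
    ⌊(k : α) * x / y⌋ - ⌊((k : α) - 1) * x / y⌋ = ((k * x / y - (k - 1) * x / y : ℕ) : ℤ) := by
  have hmono : (k - 1) * x / y ≤ k * x / y :=
    Nat.div_le_div_right (Nat.mul_le_mul_right _ (Nat.sub_le k 1))
  have hfloor (a : ℕ) : ⌊(a : α) / y⌋ = ((a / y : ℕ) : ℤ) := by
    rw [Int.floor_div_natCast, Int.floor_natCast, Int.natCast_div]
  rw [Nat.cast_sub hmono, ← hfloor, ← hfloor, Nat.cast_mul, Nat.cast_mul, Nat.cast_pred hk]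

end FloorDifference

section CeilDiv

variable {x y : ℕ}

theorem ceilDiv_mul_le_iff (hx : 0 < x) (hy : 0 < y) (i k : ℕ) :
    ceilDiv (i * y) x ≤ k ↔ i ≤ k * x / y := by
  rw [show ceilDiv (i * y) x = i * y ⌈/⌉ x from rfl, ceilDiv_le_iff_le_smul hx, smul_eq_mul,
    Nat.le_div_iff_mul_le hy, mul_comm x]

theorem ceilDiv_mul_mem_Ioc_iff (hx : 0 < x) (hy : 0 < y) (i a b : ℕ) :
    ceilDiv (i * y) x ∈ Ioc a b ↔ i ∈ Ioc (a * x / y) (b * x / y) := by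
  simp only [mem_Ioc, ← not_le, ceilDiv_mul_le_iff hx hy]

theorem ceilDiv_add_mul_self (hx : 0 < x) (p m : ℕ) : ceilDiv (p + x * m) x = ceilDiv p x + m := by
  unfold ceilDiv
  rw [show p + x * m + x - 1 = p + x - 1 + x * m by omega, Nat.add_mul_div_left _ _ hx]

theorem periodic_ceilDiv_mul_modEq (hx : 0 < x) {n m : ℕ} (hnm : n * y = x * m) (j : ℕ) :
    Function.Periodic (fun i => ceilDiv (i * y) x ≡ j [MOD m]) n := by
  intro i
  simp only [add_mul, hnm, ceilDiv_add_mul_self hx, Nat.ModEq, Nat.add_mod_right]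

end CeilDiv

theorem Nat.exists_mem_Ioc_modEq {m : ℕ} (hm : 0 < m) (j : ℕ) : ∃ k ∈ Ioc 0 m, k ≡ j [MOD m] := by
  by_cases hj : j % m = 0
  · exact ⟨m, by simp [hm], by simp [Nat.ModEq, hj]⟩
  · exact ⟨j % m, mem_Ioc.2 ⟨Nat.pos_of_ne_zero hj, (Nat.mod_lt j hm).le⟩, Nat.mod_modEq j m⟩

theorem Nat.modEq_iff_eq_of_mem_Ioc {m a b : ℕ} (ha : a ∈ Ioc 0 m) (hb : b ∈ Ioc 0 m) :
    a ≡ b [MOD m] ↔ a = b := by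
  refine ⟨fun h => h.eq_of_abs_lt ?_, fun h => h ▸ rfl⟩
  rw [mem_Ioc] at ha hb
  rw [abs_lt]
  constructor <;> omega

theorem card_filter_range_ceilDiv_mul_modEq {x y n m j k : ℕ} (hx : 0 < x) (hy : 0 < y)
    (hnm : n * y = x * m) (hk : k ∈ Ioc 0 m) (hkj : k ≡ j [MOD m]) :
    #{i ∈ range n | ceilDiv (i * y) x ≡ j [MOD m]} = k * x / y - (k - 1) * x / y := by
  rw [← Nat.count_eq_card_filter_range,
    ← Nat.filter_Ico_card_eq_of_periodic 1 n _ (periodic_ceilDiv_mul_modEq hx hnm j),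
    ← Nat.card_Ioc]
  congr 1
  ext i
  have hwindow : i ∈ Ico 1 (1 + n) ↔ ceilDiv (i * y) x ∈ Ioc 0 m := by
    rw [ceilDiv_mul_mem_Ioc_iff hx hy, Nat.zero_mul, Nat.zero_div, mul_comm m,
      ← hnm, Nat.mul_div_cancel _ hy, mem_Ico, mem_Ioc]
    omega
  have hk_eq : ceilDiv (i * y) x = k ↔ ceilDiv (i * y) x ∈ Ioc (k - 1) k := by
    rw [mem_Ioc] at hk ⊢
    omega
  rw [mem_filter, hwindow, ← ceilDiv_mul_mem_Ioc_iff hx hy, ← hk_eq]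
  constructor
  · rintro ⟨hmem, hmod⟩
    exact (Nat.modEq_iff_eq_of_mem_Ioc hmem hk).1 (hmod.trans hkj.symm)
  · intro h
    exact ⟨h ▸ hk, h ▸ hkj⟩

theorem stmt_2_general (x y c : ℕ) (hy : 0 < y) (hyx : y < x) (hc : 0 < c)
    (n m : ℕ) (hn : n = c * x) (hm : m = c * y) (j : ℕ) :
    (((Finset.range n).filter (fun i => Nat.ModEq m (ceilDiv (i * y) x) j)).card : ℤ)
      = ⌊((j : ℚ) * x) / y⌋ - ⌊(((j : ℚ) - 1) * x) / y⌋ ∧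
    ⌊((j : ℚ) * x) / y⌋ - ⌊(((j : ℚ) - 1) * x) / y⌋
      = ⌊(((j % y : ℕ) : ℚ) * x) / y⌋ - ⌊((((j % y : ℕ) : ℚ) - 1) * x) / y⌋ := by
  have hx : 0 < x := hy.trans hyx
  have hD := periodic_floor_mul_div_sub_floor (α := ℚ) x hy.ne'
  obtain ⟨k, hk, hkj⟩ := Nat.exists_mem_Ioc_modEq (hm ▸ Nat.mul_pos hc hy) j
  have hky : k % y = j % y := Nat.ModEq.of_mul_left c (hm ▸ hkj)
  refine ⟨?_, (hD.map_mod_nat j).symm⟩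
  rw [card_filter_range_ceilDiv_mul_modEq hx hy (by rw [hn, hm]; ring) hk hkj,
    ← floor_mul_div_sub_floor_eq_natCast (α := ℚ) (mem_Ioc.1 hk).1, ← hD.map_mod_nat k, hky,
    hD.map_mod_nat j]

/-- **Lemma (number_of_i_1, first part).** Let `x, y, c` be positive integers with `y < x`,
and set `n = c·x`, `m = c·y`. For every `j ∈ {0,…,m−1}`, the number of integers
`i ∈ {0,…,n−1}` such that `⌈i·y/x⌉ ≡ j (mod m)` equals `⌊j·x/y⌋ − ⌊(j−1)·x/y⌋`.
Moreover, this count depends only on the residue of `j` modulo `y`: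
`⌊j·x/y⌋ − ⌊(j−1)·x/y⌋ = ⌊r·x/y⌋ − ⌊(r−1)·x/y⌋` where `r = j mod y`. -/
theorem stmt_2 (x y c : ℕ) (hy : 0 < y) (hyx : y < x) (hc : 0 < c)
    (n m : ℕ) (hn : n = c * x) (hm : m = c * y) (j : ℕ) (hj : j < m) :
    (((Finset.range n).filter (fun i => Nat.ModEq m (ceilDiv (i * y) x) j)).card : ℤ)
      = ⌊((j : ℚ) * x) / y⌋ - ⌊(((j : ℚ) - 1) * x) / y⌋ ∧
    ⌊((j : ℚ) * x) / y⌋ - ⌊(((j : ℚ) - 1) * x) / y⌋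
      = ⌊(((j % y : ℕ) : ℚ) * x) / y⌋ - ⌊((((j % y : ℕ) : ℚ) - 1) * x) / y⌋ :=
  stmt_2_general x y c hy hyx hc n m hn hm j
end

section
/- Let x, y, c be positive integers with y < x, and set n = c·x and m = c·y. Then the number of j ∈ {0,…,m−1} for which the number of integers i ∈ {0,…,n−1} with ⌈i·y/x⌉ ≡ j (mod m) equals ⌈x/y⌉ is exactly n mod m, and for the remaining m − (n mod m) values of j this number of solutions equals ⌊x/y⌋. -/
open scoped Classical

lemma ceilDiv_le_iff {q : ℕ} (hq : 0 < q) (p j : ℕ) : ceilDiv p q ≤ j ↔ p ≤ j * q := by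
  unfold ceilDiv
  rw [Nat.div_le_iff_le_mul_add_pred hq, Nat.mul_comm q j]
  omega

lemma ceilDiv_eq_iff {q : ℕ} (hq : 0 < q) (p j : ℕ) (hj : 1 ≤ j) :
    ceilDiv p q = j ↔ (j - 1) * q < p ∧ p ≤ j * q := by
  have h1 := ceilDiv_le_iff hq p j
  have h2 := ceilDiv_le_iff hq p (j - 1)
  have h3 : (j - 1) * q + q = j * q := by
    cases j with
    | zero => omega
    | succ k => simp [Nat.succ_mul]
  omega

/-- **Lemma (number_of_i_1, third part).** Let `x, y, c` be positive integers with `y < x`,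
and set `n = c·x`, `m = c·y`. Then the number of `j ∈ {0,…,m−1}` for which the number of
integers `i ∈ {0,…,n−1}` with `⌈i·y/x⌉ ≡ j (mod m)` equals `⌈x/y⌉` is exactly `n mod m`,
and for the remaining `m − (n mod m)` values of `j` this number of solutions equals `⌊x/y⌋`. -/
theorem stmt_3 (x y c : ℕ) (hy : 0 < y) (hyx : y < x) (hc : 0 < c)
    (n m : ℕ) (hn : n = c * x) (hm : m = c * y) :
    ∃ S ⊆ Finset.range m, S.card = n % m ∧
      (∀ j ∈ S,
        ((Finset.range n).filter (fun i => Nat.ModEq m (ceilDiv (i * y) x) j)).card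
          = ceilDiv x y) ∧
      (∀ j ∈ Finset.range m \ S,
        ((Finset.range n).filter (fun i => Nat.ModEq m (ceilDiv (i * y) x) j)).card
          = x / y) := by
  have hx : 0 < x := hy.trans hyx
  have hn0 : 0 < n := by rw [hn]; positivity
  have hm0 : 0 < m := by rw [hm]; positivity
  set g : ℕ → ℕ := fun j => j * x / y with hg
  set C : ℕ → ℕ := fun j =>
    ((Finset.range n).filter (fun i => Nat.ModEq m (ceilDiv (i * y) x) j)).card with hCdef
  have hmx : m * x = n * y := by rw [hm, hn]; ring
  have hgm : g m = n := by
    show m * x / y = n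
    rw [hmx, Nat.mul_div_cancel _ hy]
  have hmono : Monotone g := fun a b hab => Nat.div_le_div_right (Nat.mul_le_mul_right _ hab)
  have hgm1 : g (m - 1) < n := by
    show (m - 1) * x / y < n
    rw [Nat.div_lt_iff_lt_mul hy]
    have : (m - 1) * x + x = m * x := by
      cases m with
      | zero => omega
      | succ k => simp [Nat.succ_mul]
    omega
  -- ceilDiv (i*y) x ≤ m for i < n
  have hbound : ∀ i, i < n → ceilDiv (i * y) x ≤ m := by
    intro i hi
    rw [ceilDiv_le_iff hx]
    calc i * y ≤ n * y := Nat.mul_le_mul_right _ hi.le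
    _ = m * x := hmx.symm
  -- the filter set for 1 ≤ j < m
  have key1 : ∀ j, 1 ≤ j → j < m →
      (Finset.range n).filter (fun i => Nat.ModEq m (ceilDiv (i * y) x) j)
        = Finset.Ioc (g (j - 1)) (g j) := by
    intro j hj1 hj2
    ext i
    simp only [Finset.mem_filter, Finset.mem_range, Finset.mem_Ioc]
    constructor
    · rintro ⟨hi, hmod⟩
      have hb := hbound i hi
      have hmod' : ceilDiv (i * y) x % m = j % m := hmod
      rw [Nat.mod_eq_of_lt hj2] at hmod'
      have heq : ceilDiv (i * y) x = j := by
        rcases Nat.lt_or_ge (ceilDiv (i * y) x) m with h | h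
        · rw [Nat.mod_eq_of_lt h] at hmod'; exact hmod'
        · have : ceilDiv (i * y) x = m := le_antisymm hb h
          rw [this, Nat.mod_self] at hmod'; omega
      rw [ceilDiv_eq_iff hx _ _ hj1] at heq
      constructor
      · show (j - 1) * x / y < i
        rw [Nat.div_lt_iff_lt_mul hy]; exact heq.1
      · show i ≤ j * x / y
        rw [Nat.le_div_iff_mul_le hy]; exact heq.2
    · rintro ⟨h1, h2⟩
      have h1' : (j - 1) * x < i * y := by
        rw [← Nat.div_lt_iff_lt_mul hy]; exact h1
      have h2' : i * y ≤ j * x := by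
        rw [← Nat.le_div_iff_mul_le hy]; exact h2
      have hin : i < n := by
        have : i ≤ g (m - 1) := le_trans h2 (hmono (by omega))
        omega
      refine ⟨hin, ?_⟩
      have heq : ceilDiv (i * y) x = j := by
        rw [ceilDiv_eq_iff hx _ _ hj1]; exact ⟨h1', h2'⟩
      show ceilDiv (i * y) x % m = j % m
      rw [heq]
  -- the filter set for j = 0
  have key2 : (Finset.range n).filter (fun i => Nat.ModEq m (ceilDiv (i * y) x) 0)
      = insert 0 (Finset.Ioc (g (m - 1)) (n - 1)) := by
    ext i
    simp only [Finset.mem_filter, Finset.mem_range, Finset.mem_insert, Finset.mem_Ioc]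
    constructor
    · rintro ⟨hi, hmod⟩
      have hb := hbound i hi
      have hmod' : ceilDiv (i * y) x % m = 0 := by
        have : ceilDiv (i * y) x % m = 0 % m := hmod
        simpa using this
      rcases Nat.eq_zero_or_pos (ceilDiv (i * y) x) with h0 | hpos
      · left
        have : i * y ≤ 0 * x := by rw [← ceilDiv_le_iff hx]; omega
        simp at this; omega
      · right
        have heq : ceilDiv (i * y) x = m := by
          rcases Nat.lt_or_ge (ceilDiv (i * y) x) m with h | h
          · rw [Nat.mod_eq_of_lt h] at hmod'; omega
          · exact le_antisymm hb h
        rw [ceilDiv_eq_iff hx _ _ hm0] at heq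
        have : (m - 1) * x / y < i := by
          rw [Nat.div_lt_iff_lt_mul hy]; exact heq.1
        exact ⟨this, by omega⟩
    · rintro (rfl | ⟨h1, h2⟩)
      · refine ⟨hn0, ?_⟩
        show ceilDiv (0 * y) x % m = 0 % m
        have : ceilDiv (0 * y) x = 0 := by
          have := (ceilDiv_le_iff hx (0 * y) 0).mpr (by simp)
          omega
        rw [this]
      · have hin : i < n := by omega
        refine ⟨hin, ?_⟩
        have h1' : (m - 1) * x < i * y := by
          rw [← Nat.div_lt_iff_lt_mul hy]; exact h1
        have heq : ceilDiv (i * y) x = m := by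
          rw [ceilDiv_eq_iff hx _ _ hm0]
          exact ⟨h1', by rw [hmx]; exact Nat.mul_le_mul_right _ (by omega)⟩
        show ceilDiv (i * y) x % m = 0 % m
        rw [heq]; simp
  have hC0 : C 0 = g m - g (m - 1) := by
    show ((Finset.range n).filter (fun i => Nat.ModEq m (ceilDiv (i * y) x) 0)).card
      = g m - g (m - 1)
    rw [key2, Finset.card_insert_of_notMem (by simp), Nat.card_Ioc, hgm]
    omega
  have hCj : ∀ j, 1 ≤ j → j < m → C j = g j - g (j - 1) := by
    intro j h1 h2
    show ((Finset.range n).filter (fun i => Nat.ModEq m (ceilDiv (i * y) x) j)).card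
      = g j - g (j - 1)
    rw [key1 j h1 h2, Nat.card_Ioc]
  -- each successive difference of g is x/y or x/y + 1
  have hd : ∀ j, g (j + 1) - g j = x / y ∨ (g (j + 1) - g j = x / y + 1 ∧ 0 < x % y) := by
    intro j
    have h1 : g (j + 1) = (j * x + x) / y := by
      show (j + 1) * x / y = _
      rw [Nat.succ_mul]
    have h2 : (j * x + x) / y = j * x / y + x / y + if y ≤ j * x % y + x % y then 1 else 0 :=
      Nat.add_div hy
    have h3 : j * x % y < y := Nat.mod_lt _ hy
    have h4 : x % y < y := Nat.mod_lt _ hy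
    have h5 : g j ≤ g (j + 1) := hmono (Nat.le_succ _)
    show g (j + 1) - g j = x / y ∨ _
    have hgj : g j = j * x / y := rfl
    split_ifs at h2 with hcond
    · right; constructor <;> omega
    · left; omega
  have hCval : ∀ j ∈ Finset.range m, C j = x / y ∨ (C j = x / y + 1 ∧ 0 < x % y) := by
    intro j hj
    rw [Finset.mem_range] at hj
    rcases Nat.eq_zero_or_pos j with rfl | hj1
    · have := hd (m - 1)
      have hm1 : m - 1 + 1 = m := by omega
      rw [hm1] at this
      rw [hC0]; exact this
    · have := hd (j - 1)
      have hj1' : j - 1 + 1 = j := by omega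
      rw [hj1'] at this
      rw [hCj j hj1 hj]; exact this
  -- total sum
  have hsum : ∑ j ∈ Finset.range m, C j = n := by
    have hm1 : m = (m - 1) + 1 := by omega
    rw [hm1, Finset.sum_range_succ']
    have : ∑ i ∈ Finset.range (m - 1), C (i + 1)
        = ∑ i ∈ Finset.range (m - 1), (g (i + 1) - g i) := by
      apply Finset.sum_congr rfl
      intro i hi
      rw [Finset.mem_range] at hi
      have := hCj (i + 1) (by omega) (by omega)
      simpa using this
    rw [this, hC0, Finset.sum_range_tsub hmono]
    have hg0 : g 0 = 0 := by show 0 * x / y = 0; simp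
    have e1 : g (m - 1 + 1) = g m := by rw [show m - 1 + 1 = m from by omega]
    have hle : g (m - 1) ≤ g m := hmono (by omega)
    omega
  rcases Nat.eq_zero_or_pos (x % y) with hxy | hxy
  · -- y divides x: all counts equal x / y, take S = ∅
    refine ⟨∅, Finset.empty_subset _, ?_, by simp, ?_⟩
    · have hmn : m * (x / y) = n := by
        rw [hm, hn]
        have h5 : y * (x / y) = x := Nat.mul_div_cancel' (Nat.dvd_of_mod_eq_zero hxy)
        calc c * y * (x / y) = c * (y * (x / y)) := by ring
        _ = c * x := by rw [h5]
      have : n % m = 0 := by rw [← hmn]; exact Nat.mul_mod_right _ _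
      simp [this]
    · intro j hj
      rw [Finset.sdiff_empty] at hj
      rcases hCval j hj with h | h
      · exact h
      · omega
  · -- y does not divide x
    have hceil : ceilDiv x y = x / y + 1 := by
      have h1 := ceilDiv_le_iff hy x (x / y + 1)
      have h2 := ceilDiv_le_iff hy x (x / y)
      rw [add_mul, one_mul] at h1
      have h3 : x / y * y + x % y = x := Nat.div_add_mod' x y
      have h4 : x % y < y := Nat.mod_lt _ hy
      omega
    set S := (Finset.range m).filter (fun j => C j = x / y + 1) with hS
    have hSsub : S ⊆ Finset.range m := Finset.filter_subset _ _
    have hScard : S.card = n % m := by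
      have hsplit := Finset.sum_filter_add_sum_filter_not (Finset.range m)
        (fun j => C j = x / y + 1) C
      have hsum1 : ∑ j ∈ S, C j = S.card * (x / y + 1) := by
        rw [Finset.sum_congr rfl (fun j hj => (Finset.mem_filter.mp hj).2),
          Finset.sum_const, smul_eq_mul]
      have hsum2 : ∑ j ∈ (Finset.range m).filter (fun j => ¬ C j = x / y + 1), C j
          = ((Finset.range m).filter (fun j => ¬ C j = x / y + 1)).card * (x / y) := by
        rw [Finset.sum_congr rfl (fun j hj => ?_), Finset.sum_const, smul_eq_mul]
        rw [Finset.mem_filter] at hj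
        rcases hCval j hj.1 with h | h
        · exact h
        · exact absurd h.1 hj.2
      have hcards : S.card + ((Finset.range m).filter (fun j => ¬ C j = x / y + 1)).card = m := by
        rw [hS, Finset.card_filter_add_card_filter_not, Finset.card_range]
      have hndm : n / m = x / y := by
        rw [hn, hm, Nat.mul_div_mul_left _ _ hc]
      have hnm := Nat.div_add_mod n m
      rw [hndm] at hnm
      -- arithmetic
      set a := S.card with ha
      set b := ((Finset.range m).filter (fun j => ¬ C j = x / y + 1)).card with hb
      rw [hsum1, hsum2, hsum] at hsplit
      have e1 : a * (x / y + 1) = a * (x / y) + a := by ring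
      have e2 : a * (x / y) + b * (x / y) = m * (x / y) := by
        rw [← add_mul, hcards]
      omega
    refine ⟨S, hSsub, hScard, ?_, ?_⟩
    · intro j hj
      have := (Finset.mem_filter.mp hj).2
      rw [hceil]
      exact this
    · intro j hj
      rw [Finset.mem_sdiff] at hj
      rcases hCval j hj.1 with h | h
      · exact h
      · exact absurd (by rw [hS, Finset.mem_filter]; exact ⟨hj.1, h.1⟩) hj.2
end

section
/- Let x, y, d, c be positive integers with y < x and d < c, and set a = d·y, b = d·x, n = c·x, m = c·y. Then for every integer l ∈ {0,…,m−1}, the number of integers i ∈ {0,…,n−1} such that ⌈i·y/x⌉ mod m lies in the set {(l−(a−1)) mod m, (l−(a−2)) mod m, …, l mod m} of a consecutive residues modulo m is exactly b. -/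
open scoped Classical

lemma ceilDiv_le' (p x k : ℕ) (hx : 0 < x) : ceilDiv p x ≤ k ↔ p ≤ k * x := by
  rw [ceilDiv, Nat.div_le_iff_le_mul_add_pred hx, mul_comm x k]
  set q := k * x with hq
  omega

lemma key_iff (i k x y : ℕ) (hx : 0 < x) (hy : 0 < y) :
    ceilDiv (i * y) x ≤ k ↔ i ≤ k * x / y := by
  rw [ceilDiv_le' _ _ _ hx, Nat.le_div_iff_mul_le hy]

lemma exists_mod_iff (v M A l : ℕ) (hv : v ≤ M) (hl : l < M) (hA : A ≤ M) :
    (∃ t < A, (v + t) % M = l) ↔ ((v ≤ l ∧ l < v + A) ∨ (M + l < v + A)) := by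
  constructor
  · rintro ⟨t, ht, hmod⟩
    rcases lt_or_ge (v + t) M with h | h
    · rw [Nat.mod_eq_of_lt h] at hmod; omega
    · rw [Nat.mod_eq_sub_mod h, Nat.mod_eq_of_lt (by omega)] at hmod; omega
  · rintro (⟨h1, h2⟩ | h)
    · exact ⟨l - v, by omega, by rw [show v + (l - v) = l by omega, Nat.mod_eq_of_lt hl]⟩
    · exact ⟨M + l - v, by omega, by
        rw [show v + (M + l - v) = M + l by omega, Nat.add_mod_left, Nat.mod_eq_of_lt hl]⟩

lemma master (x y A B M N l : ℕ) (hx : 0 < x) (hy : 0 < y) (hAB : A * x = B * y)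
    (hMN : M * x = N * y) (hAM : A ≤ M) (hl : l < M) :
    ((Finset.range N).filter (fun i => ∃ t < A, (ceilDiv (i * y) x + t) % M = l)).card = B := by
  have hBN : B ≤ N := by
    have h : B * y ≤ N * y := by rw [← hAB, ← hMN]; exact Nat.mul_le_mul_right x hAM
    exact Nat.le_of_mul_le_mul_right h hy
  have hgM : M * x / y = N := by rw [hMN, Nat.mul_div_cancel _ hy]
  have hv_le : ∀ i, i < N → ceilDiv (i * y) x ≤ M := by
    intro i hi
    rw [key_iff i M x y hx hy, hgM]; omega
  have hgl_lt : l * x / y < N := by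
    rw [Nat.div_lt_iff_lt_mul hy, ← hMN]
    exact (Nat.mul_lt_mul_right hx).mpr hl
  rcases le_or_gt A l with hc | hc
  · -- case A ≤ l
    have hgrel : l * x / y = (l - A) * x / y + B := by
      obtain ⟨l', rfl⟩ : ∃ l', l = l' + A := ⟨l - A, by omega⟩
      rw [Nat.add_sub_cancel, add_mul, hAB, add_comm (l' * x) (B * y), mul_comm B y,
        Nat.mul_add_div hy]
      omega
    have hfilter : (Finset.range N).filter
          (fun i => ∃ t < A, (ceilDiv (i * y) x + t) % M = l)
        = Finset.Ico ((l - A) * x / y + 1) (l * x / y + 1) := by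
      ext i
      simp only [Finset.mem_filter, Finset.mem_range, Finset.mem_Ico]
      have h1 := key_iff i l x y hx hy
      have h2 := key_iff i (l - A) x y hx hy
      set G1 := l * x / y with hG1
      set G2 := (l - A) * x / y with hG2
      set v := ceilDiv (i * y) x with hvdef
      constructor
      · rintro ⟨hi, hP⟩
        rw [exists_mod_iff v M A l (hv_le i hi) hl hAM] at hP
        have hv := hv_le i hi
        omega
      · rintro ⟨hi1, hi2⟩
        have hiN : i < N := by omega
        refine ⟨hiN, (exists_mod_iff v M A l (hv_le i hiN) hl hAM).2 ?_⟩
        have hv := hv_le i hiN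
        omega
    rw [hfilter, Nat.card_Ico]
    omega
  · -- case l < A
    have hglB : l * x / y < B := by
      rw [Nat.div_lt_iff_lt_mul hy, ← hAB]
      exact (Nat.mul_lt_mul_right hx).mpr hc
    have hMAx : (M - A) * x = (N - B) * y := by
      rw [Nat.sub_mul, hMN, hAB, ← Nat.sub_mul]
    have hG3eq : ((M - A) + l) * x / y = (N - B) + l * x / y := by
      rw [add_mul, hMAx, mul_comm (N - B) y, Nat.mul_add_div hy]
    have hfilter : (Finset.range N).filter
          (fun i => ∃ t < A, (ceilDiv (i * y) x + t) % M = l)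
        = Finset.range (l * x / y + 1) ∪ Finset.Ico (((M - A) + l) * x / y + 1) N := by
      ext i
      simp only [Finset.mem_filter, Finset.mem_range, Finset.mem_Ico, Finset.mem_union]
      have h1 := key_iff i l x y hx hy
      have h3 := key_iff i ((M - A) + l) x y hx hy
      set G1 := l * x / y with hG1
      set G3 := ((M - A) + l) * x / y with hG3
      set v := ceilDiv (i * y) x with hvdef
      constructor
      · rintro ⟨hi, hP⟩
        rw [exists_mod_iff v M A l (hv_le i hi) hl hAM] at hP
        have hv := hv_le i hi
        omega
      · intro hi
        have hiN : i < N := by omega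
        refine ⟨hiN, (exists_mod_iff v M A l (hv_le i hiN) hl hAM).2 ?_⟩
        have hv := hv_le i hiN
        omega
    rw [hfilter, Finset.card_union_of_disjoint, Finset.card_range, Nat.card_Ico]
    · omega
    · rw [Finset.disjoint_left]
      intro i hi1 hi2
      simp only [Finset.mem_range] at hi1
      simp only [Finset.mem_Ico] at hi2
      omega

/-- **Lemma (number_of_i_2).** Let `x, y, d, c` be positive integers with `y < x` and `d < c`,
and set `a = d·y`, `b = d·x`, `n = c·x`, `m = c·y`. Then for every integer `l ∈ {0,…,m−1}`,
the number of integers `i ∈ {0,…,n−1}` such that `⌈i·y/x⌉ mod m` lies in the set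
`{(l−(a−1)) mod m, …, l mod m}` of `a` consecutive residues modulo `m`
(i.e. `⌈i·y/x⌉ ≡ l − t (mod m)` for some `t ∈ {0,…,a−1}`) is exactly `b`. -/
theorem stmt_4 (x y d c : ℕ) (hy : 0 < y) (hyx : y < x) (hd : 0 < d) (hdc : d < c)
    (a b n m : ℕ) (ha : a = d * y) (hb : b = d * x) (hn : n = c * x) (hm : m = c * y)
    (l : ℕ) (hl : l < m) :
    ((Finset.range n).filter
        (fun i => ∃ t < a, (ceilDiv (i * y) x + t) % m = l)).card = b := by
  subst ha hb hn hm
  exact master x y (d * y) (d * x) (c * y) (c * x) l (hy.trans hyx) hy (by ring) (by ring)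
    (Nat.mul_le_mul_right y hdc.le) hl
end

section
/- Let n, m, a, b be positive integers with 1 < m < n, a·n = b·m, and a < m. Let c = gcd(n,m), x = n/c, y = m/c, and let G₂ be the bipartite graph of Construction 3. Then G₂ is (a,b)-regular: every vertex of U has degree exactly a and every vertex of V has degree exactly b. -/
open scoped Classical

/-- Adjacency of Construction 3: with `c = gcd(n,m)`, `x = n/c`, `y = m/c`, vertex `u_i`
is adjacent to the vertices `v_{(⌈i·y/x⌉+α) mod m}` for `α ∈ {0,…,a−1}`. -/
def cons3Adj (n m a : ℕ) (u : Fin n) (v : Fin m) : Prop :=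
  ∃ α < a,
    (ceilDiv ((u : ℕ) * (m / Nat.gcd n m)) (n / Nat.gcd n m) + α) % m = (v : ℕ)

lemma ceilDiv_le_iff_s5 {x : ℕ} (hx : 0 < x) (p B : ℕ) :
    ceilDiv p x ≤ B ↔ p ≤ B * x := by
  unfold ceilDiv
  rw [← Nat.lt_succ_iff, Nat.div_lt_iff_lt_mul hx]
  have h : Nat.succ B * x = B * x + x := by rw [Nat.succ_mul]
  omega

lemma card_filter_fin (n : ℕ) (p : ℕ → Prop) [DecidablePred p] :
    (Finset.univ.filter (fun i : Fin n => p (i : ℕ))).card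
      = ((Finset.range n).filter p).card := by
  refine Finset.card_bij (fun i _ => (i : ℕ)) ?_ ?_ ?_
  · intro i hi
    simp only [Finset.mem_filter, Finset.mem_univ, true_and] at hi
    simp [Finset.mem_filter, Finset.mem_range, i.isLt, hi]
  · intro i _ j _ h
    exact Fin.ext h
  · intro j hj
    simp only [Finset.mem_filter, Finset.mem_range] at hj
    exact ⟨⟨j, hj.1⟩, by simp [Finset.mem_filter, hj.2], rfl⟩

/-- **Observation (degrees).** Let `n, m, a, b` be positive integers with `1 < m < n`,
`a·n = b·m`, and `a < m`. Then the graph `G₂` of Construction 3 is `(a,b)`-regular: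
every vertex of `U` has degree exactly `a` and every vertex of `V` has degree exactly `b`. -/
theorem stmt_5 (n m a b : ℕ) (hm : 1 < m) (hmn : m < n) (ha : 0 < a) (hb : 0 < b)
    (hab : a * n = b * m) (ham : a < m) :
    (∀ u : Fin n, (Finset.univ.filter (fun v : Fin m => cons3Adj n m a u v)).card = a) ∧
    (∀ v : Fin m, (Finset.univ.filter (fun u : Fin n => cons3Adj n m a u v)).card = b) := by
  have hn0 : 0 < n := by omega
  have hm0 : 0 < m := by omega
  obtain ⟨c, hc⟩ : ∃ c, Nat.gcd n m = c := ⟨_, rfl⟩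
  obtain ⟨x, hxd⟩ : ∃ x, n / c = x := ⟨_, rfl⟩
  obtain ⟨y, hyd⟩ : ∃ y, m / c = y := ⟨_, rfl⟩
  have hadj : ∀ (u : Fin n) (vv : Fin m),
      cons3Adj n m a u vv ↔ ∃ α < a, (ceilDiv ((u : ℕ) * y) x + α) % m = (vv : ℕ) := by
    intro u vv; unfold cons3Adj; rw [hc, hxd, hyd]
  have hc0 : 0 < c := hc ▸ Nat.gcd_pos_of_pos_left m hn0
  have hnc : n = c * x := by rw [← hxd, Nat.mul_div_cancel' (hc ▸ Nat.gcd_dvd_left n m)]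
  have hmc : m = c * y := by rw [← hyd, Nat.mul_div_cancel' (hc ▸ Nat.gcd_dvd_right n m)]
  have hx0 : 0 < x := by nlinarith
  have hy0 : 0 < y := by nlinarith
  -- a * x = b * y
  have haxby : a * x = b * y := by
    have h : c * (a * x) = c * (b * y) := by nlinarith
    exact Nat.eq_of_mul_eq_mul_left hc0 h
  -- y ∣ a
  have hcop : Nat.Coprime x y := by
    have := Nat.coprime_div_gcd_div_gcd (m := n) (n := m) (hc ▸ hc0)
    rwa [hc, hxd, hyd] at this
  have hya : y ∣ a := (hcop.symm).dvd_of_dvd_mul_right ⟨b, by linarith [haxby]⟩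
  obtain ⟨d, had'⟩ := hya
  have had : a = d * y := by rw [had', Nat.mul_comm]
  clear had'
  have hbd : b = d * x := by
    have h : b * y = (d * x) * y := by rw [← haxby, had]; ring
    exact Nat.eq_of_mul_eq_mul_right hy0 h
  have hd0 : 0 < d := by
    rcases Nat.eq_zero_or_pos d with h | h
    · subst h; simp at hbd; omega
    · exact h
  have hdc : d < c := by
    have h1 : d * y < c * y := by omega
    exact (Nat.mul_lt_mul_right hy0).mp h1
  constructor
  · -- degrees on the U side
    intro u
    have himg : (Finset.univ.filter (fun v : Fin m => cons3Adj n m a u v))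
        = (Finset.range a).image
            (fun α => (⟨(ceilDiv ((u : ℕ) * y) x + α) % m, Nat.mod_lt _ hm0⟩ : Fin m)) := by
      ext vv
      simp only [Finset.mem_filter, Finset.mem_univ, true_and, Finset.mem_image,
        Finset.mem_range, hadj]
      constructor
      · rintro ⟨α, hα, hmod⟩
        exact ⟨α, hα, by apply Fin.ext; simpa using hmod⟩
      · rintro ⟨α, hα, hEq⟩
        refine ⟨α, hα, ?_⟩
        have := congrArg Fin.val hEq
        simpa using this
    rw [himg, Finset.card_image_of_injOn, Finset.card_range]
    intro α hα β hβ hEq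
    simp only [Finset.coe_range, Set.mem_Iio] at hα hβ
    have hEq' : (ceilDiv ((u : ℕ) * y) x + α) % m = (ceilDiv ((u : ℕ) * y) x + β) % m := by
      have := congrArg Fin.val hEq
      simpa using this
    have hmeq : α % m = β % m := Nat.ModEq.add_left_cancel' _ hEq'
    rwa [Nat.mod_eq_of_lt (by omega), Nat.mod_eq_of_lt (by omega)] at hmeq
  · -- degrees on the V side
    intro v
    obtain ⟨t, ht⟩ : ∃ t, (v : ℕ) * x / y = t := ⟨_, rfl⟩
    -- basic facts about K i := ceilDiv (i * y) x
    have hKle : ∀ i B : ℕ, ceilDiv (i * y) x ≤ B ↔ i ≤ B * x / y := by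
      intro i B
      rw [ceilDiv_le_iff_s5 hx0, Nat.le_div_iff_mul_le hy0]
    have hshift : ∀ w e : ℕ, (w + e * y) * x / y = w * x / y + e * x := by
      intro w e
      have h : (w + e * y) * x = w * x + (e * x) * y := by ring
      rw [h, Nat.add_mul_div_right _ _ hy0]
    have htn : t < n := by
      have h1 : t * y ≤ (v : ℕ) * x := by rw [← ht]; exact Nat.div_mul_le_self _ _
      have h2 : (v : ℕ) * x < (c * y) * x := by
        have := v.isLt
        have : (v : ℕ) < c * y := by omega
        exact (Nat.mul_lt_mul_right hx0).mpr this
      by_contra hcon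
      push_neg at hcon
      have h3 : n * y ≤ t * y := Nat.mul_le_mul_right y hcon
      have h4 : (c * y) * x = n * y := by rw [hnc]; ring
      linarith
    have hnsum : n = d * x + (c - d) * x := by
      have h : d * x + (c - d) * x = (d + (c - d)) * x := by ring
      rw [h]
      have : d + (c - d) = c := by omega
      rw [this, hnc, Nat.mul_comm]
    have ht2 : ((v : ℕ) + (c - d) * y) * x / y = t + (c - d) * x := by
      rw [hshift, ht]
    have hma : m - a = (c - d) * y := by
      have h : (c - d) * y = c * y - d * y := Nat.sub_mul c d y
      rw [h, ← hmc, ← had]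
    -- the key characterization of adjacency
    have hQ : ∀ u : Fin n,
        cons3Adj n m a u v ↔
          (((u : ℕ) ≤ t ∧ (a ≤ (v : ℕ) → t - d * x < (u : ℕ))) ∨ t + (c - d) * x < (u : ℕ)) := by
      intro u
      rw [hadj]
      clear hadj
      obtain ⟨i, hi⟩ : ∃ i, (u : ℕ) = i := ⟨_, rfl⟩
      rw [hi]
      have hin : i < n := hi ▸ u.isLt
      have hKm : ceilDiv (i * y) x ≤ m := by
        rw [ceilDiv_le_iff_s5 hx0]
        have h1 : i * y ≤ n * y := Nat.mul_le_mul_right y (le_of_lt hin)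
        have h2 : n * y = m * x := by rw [hnc, hmc]; ring
        linarith
      obtain ⟨K, hKdef⟩ : ∃ K, ceilDiv (i * y) x = K := ⟨_, rfl⟩
      rw [hKdef] at hKm ⊢
      -- step 1: remove the mod
      have step1 : (∃ α < a, (K + α) % m = (v : ℕ)) ↔
          ((K ≤ (v : ℕ) ∧ (v : ℕ) < K + a) ∨ (v : ℕ) + m < K + a) := by
        constructor
        · rintro ⟨α, hα, hmod⟩
          have hv := v.isLt
          rcases Nat.lt_or_ge (K + α) m with hlt | hge
          · rw [Nat.mod_eq_of_lt hlt] at hmod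
            omega
          · have hsm : K + α - m < m := by omega
            have h3 : (K + α) % m = K + α - m := by
              rw [Nat.mod_eq_sub_mod hge, Nat.mod_eq_of_lt hsm]
            rw [h3] at hmod
            omega
        · intro h
          have hv := v.isLt
          rcases h with h | h
          · refine ⟨(v : ℕ) - K, by omega, ?_⟩
            have he : K + ((v : ℕ) - K) = (v : ℕ) := by omega
            rw [he, Nat.mod_eq_of_lt hv]
          · refine ⟨(v : ℕ) + m - K, by omega, ?_⟩
            have he : K + ((v : ℕ) + m - K) = (v : ℕ) + m := by omega
            rw [he, Nat.add_mod_right, Nat.mod_eq_of_lt hv]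
      rw [step1]
      clear step1
      -- step 2: translate conditions on K into conditions on i
      have e1 : K ≤ (v : ℕ) ↔ i ≤ t := by rw [← hKdef, hKle, ht]
      have e3 : K ≤ (v : ℕ) + m - a ↔ i ≤ t + (c - d) * x := by
        have h1 : K ≤ (v : ℕ) + m - a ↔ i ≤ ((v : ℕ) + m - a) * x / y := by
          rw [← hKdef, hKle]
        rw [show (v : ℕ) + m - a = (v : ℕ) + (c - d) * y from by omega, ht2] at h1
        omega
      constructor
      · rintro (⟨h1, h2⟩ | h1)
        · refine Or.inl ⟨e1.mp h1, fun hva => ?_⟩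
          -- v < K + a and a ≤ v: K > v - a so i > (v-a)*x/y = t - d*x
          have e2 : K ≤ (v : ℕ) - a ↔ i ≤ t - d * x := by
            have h0 := hshift ((v : ℕ) - a) d
            rw [show (v : ℕ) - a + d * y = (v : ℕ) from by omega, ht] at h0
            have h1 : K ≤ (v : ℕ) - a ↔ i ≤ ((v : ℕ) - a) * x / y := by
              rw [← hKdef, hKle]
            obtain ⟨w, hw⟩ : ∃ w, ((v : ℕ) - a) * x / y = w := ⟨_, rfl⟩
            rw [hw] at h0 h1
            omega
          have : ¬ (K ≤ (v : ℕ) - a) := by omega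
          omega
        · refine Or.inr ?_
          have : ¬ (K ≤ (v : ℕ) + m - a) := by omega
          omega
      · rintro (⟨h1, h2⟩ | h1)
        · refine Or.inl ⟨e1.mpr h1, ?_⟩
          by_cases hva : a ≤ (v : ℕ)
          · have e2 : K ≤ (v : ℕ) - a ↔ i ≤ t - d * x := by
              have h0 := hshift ((v : ℕ) - a) d
              rw [show (v : ℕ) - a + d * y = (v : ℕ) from by omega, ht] at h0
              have h1 : K ≤ (v : ℕ) - a ↔ i ≤ ((v : ℕ) - a) * x / y := by
                rw [← hKdef, hKle]
              obtain ⟨w, hw⟩ : ∃ w, ((v : ℕ) - a) * x / y = w := ⟨_, rfl⟩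
              rw [hw] at h0 h1
              omega
            have := h2 hva
            have : ¬ (i ≤ t - d * x) := by omega
            omega
          · omega
        · refine Or.inr ?_
          have : ¬ (i ≤ t + (c - d) * x) := by omega
          omega
    -- rewrite the filter using the characterization
    have hcard : (Finset.univ.filter (fun u : Fin n => cons3Adj n m a u v)).card
        = ((Finset.range n).filter
            (fun i : ℕ => (i ≤ t ∧ (a ≤ (v : ℕ) → t - d * x < i)) ∨ t + (c - d) * x < i)).card := by
      refine Finset.card_bij (fun u _ => (u : ℕ)) ?_ ?_ ?_
      · intro u hu
        simp only [Finset.mem_filter, Finset.mem_univ, true_and] at hu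
        simp only [Finset.mem_filter, Finset.mem_range]
        exact ⟨u.isLt, (hQ u).mp hu⟩
      · intro u₁ _ u₂ _ h
        exact Fin.ext h
      · intro j hj
        simp only [Finset.mem_filter, Finset.mem_range] at hj
        refine ⟨⟨j, hj.1⟩, ?_, rfl⟩
        simp only [Finset.mem_filter, Finset.mem_univ, true_and]
        exact (hQ ⟨j, hj.1⟩).mpr hj.2
    rw [hcard]
    by_cases hva : a ≤ (v : ℕ)
    · -- the upper window case: filter = Ioc (t - d*x) t
      have hdxt : d * x ≤ t := by
        rw [← ht, Nat.le_div_iff_mul_le hy0]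
        calc d * x * y = a * x := by rw [had]; ring
          _ ≤ (v : ℕ) * x := Nat.mul_le_mul_right x hva
      have hfe : ((Finset.range n).filter
          (fun i : ℕ => (i ≤ t ∧ (a ≤ (v : ℕ) → t - d * x < i)) ∨ t + (c - d) * x < i))
          = Finset.Ioc (t - d * x) t := by
        ext i
        simp only [Finset.mem_filter, Finset.mem_range, Finset.mem_Ioc]
        constructor
        · rintro ⟨hin, h⟩
          rcases h with ⟨h1, h2⟩ | h1
          · exact ⟨h2 hva, h1⟩
          · exfalso; omega
        · rintro ⟨h1, h2⟩
          exact ⟨by omega, Or.inl ⟨h2, fun _ => h1⟩⟩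
      rw [hfe, Nat.card_Ioc]
      omega
    · -- the wrap-around case: filter = range n \ Ioc t (t + (c-d)*x)
      have htdx : t < d * x := by
        have h1 : t * y ≤ (v : ℕ) * x := by rw [← ht]; exact Nat.div_mul_le_self _ _
        have h2 : (v : ℕ) * x < a * x := (Nat.mul_lt_mul_right hx0).mpr (by omega)
        have h3 : a * x = (d * x) * y := by rw [had]; ring
        by_contra hcon
        push_neg at hcon
        have : (d * x) * y ≤ t * y := Nat.mul_le_mul_right y hcon
        omega
      have hsub : Finset.Ioc t (t + (c - d) * x) ⊆ Finset.range n := by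
        intro i hi
        simp only [Finset.mem_Ioc] at hi
        simp only [Finset.mem_range]
        omega
      have hfe : ((Finset.range n).filter
          (fun i : ℕ => (i ≤ t ∧ (a ≤ (v : ℕ) → t - d * x < i)) ∨ t + (c - d) * x < i))
          = Finset.range n \ Finset.Ioc t (t + (c - d) * x) := by
        ext i
        simp only [Finset.mem_filter, Finset.mem_range, Finset.mem_sdiff, Finset.mem_Ioc]
        constructor
        · rintro ⟨hin, h⟩
          refine ⟨hin, ?_⟩
          rcases h with ⟨h1, _⟩ | h1 <;> omega
        · rintro ⟨hin, h⟩
          refine ⟨hin, ?_⟩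
          by_cases h1 : i ≤ t
          · exact Or.inl ⟨h1, fun hv => by omega⟩
          · exact Or.inr (by omega)
      rw [hfe, Finset.card_sdiff_of_subset hsub, Finset.card_range, Nat.card_Ioc]
      omega
end

section
/- Let n, m be positive integers such that 1 < m < n and n divides m·(n−m+1). Let a = m·(n−m+1)/n, b = n−m+1, c = gcd(n,m), d = gcd(a,b), x = n/c, y = m/c, and p = c − d. Then p = (m−1)/x = (c·y−1)/x = (y·d−1)/(x−y) = (a−1)/(x−y) = (m−a)/y. Moreover p > 0, c > d > 0, c > p, x > y > 0, n > m > 2, b > a > 1, n − x ≥ b, m − y ≥ a, n − c ≥ m ≥ c, and b − d ≥ a ≥ d. -/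
/-- **Lemma (params_properties).** Let `n, m` be positive integers such that `1 < m < n` and
`n` divides `m·(n−m+1)`. Let `a = m·(n−m+1)/n`, `b = n−m+1`, `c = gcd(n,m)`, `d = gcd(a,b)`,
`x = n/c`, `y = m/c`, and `p = c − d`. Then
`p = (m−1)/x = (c·y−1)/x = (y·d−1)/(x−y) = (a−1)/(x−y) = (m−a)/y`
(stated as exact multiplicative identities). Moreover `p > 0`, `c > d > 0`, `c > p`,
`x > y > 0`, `n > m > 2`, `b > a > 1`, `n − x ≥ b`, `m − y ≥ a`, `n − c ≥ m ≥ c`,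
and `b − d ≥ a ≥ d`. -/
theorem stmt_7 (n m a b c d x y p : ℕ) (hm : 1 < m) (hmn : m < n)
    (hdvd : n ∣ m * (n - m + 1))
    (ha : a = m * (n - m + 1) / n) (hb : b = n - m + 1)
    (hc : c = Nat.gcd n m) (hd : d = Nat.gcd a b)
    (hx : x = n / c) (hy : y = m / c) (hp : p = c - d) :
    (p * x = m - 1 ∧ p * x = c * y - 1 ∧ p * (x - y) = y * d - 1 ∧
      p * (x - y) = a - 1 ∧ p * y = m - a) ∧
    0 < p ∧ d < c ∧ 0 < d ∧ p < c ∧ y < x ∧ 0 < y ∧ m < n ∧ 2 < m ∧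
    a < b ∧ 1 < a ∧ b ≤ n - x ∧ a ≤ m - y ∧ m ≤ n - c ∧ c ≤ m ∧
    a ≤ b - d ∧ d ≤ a := by
  have hn0 : 0 < n := by omega
  have hgcdpos : 0 < Nat.gcd n m := Nat.gcd_pos_of_pos_left _ hn0
  have hc0 : 0 < c := by rw [hc]; exact hgcdpos
  have hcn : c ∣ n := hc ▸ Nat.gcd_dvd_left n m
  have hcm : c ∣ m := hc ▸ Nat.gcd_dvd_right n m
  have e3 : c * x = n := by rw [hx]; exact Nat.mul_div_cancel' hcn
  have e2 : c * y = m := by rw [hy]; exact Nat.mul_div_cancel' hcm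
  have hx0 : 0 < x := by
    rcases Nat.eq_zero_or_pos x with h | h
    · rw [h, Nat.mul_zero] at e3; omega
    · exact h
  have hy0 : 0 < y := by
    rcases Nat.eq_zero_or_pos y with h | h
    · rw [h, Nat.mul_zero] at e2; omega
    · exact h
  have hyx : y < x := by
    have : c * y < c * x := by rw [e2, e3]; exact hmn
    exact Nat.lt_of_mul_lt_mul_left this
  have hcop : Nat.Coprime x y := by
    rw [hx, hy, hc]; exact Nat.coprime_div_gcd_div_gcd hgcdpos
  -- n ∣ m * (m - 1)
  have hmm : n ∣ m * (m - 1) := by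
    have key : m * (n - m + 1) + m * (m - 1) = m * n := by
      rw [← Nat.mul_add]; congr 1; omega
    have hmn' : n ∣ m * n := dvd_mul_left n m
    exact (Nat.dvd_add_right hdvd).mp (key ▸ hmn')
  -- x ∣ m - 1
  have hxm1 : x ∣ m - 1 := by
    have h1 : c * x ∣ c * (y * (m - 1)) := by
      rw [← Nat.mul_assoc, e3, e2]; exact hmm
    have h2 : x ∣ y * (m - 1) := (Nat.mul_dvd_mul_iff_left hc0).mp h1
    exact hcop.dvd_of_dvd_mul_left h2
  obtain ⟨k, hk⟩ := hxm1
  have e1 : k * x = m - 1 := by rw [hk, Nat.mul_comm]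
  have hk0 : 0 < k := by
    rcases Nat.eq_zero_or_pos k with h | h
    · rw [h, Nat.zero_mul] at e1; omega
    · exact h
  have hkc : k < c := by
    have : k * x < c * x := by rw [e1, e3]; omega
    exact Nat.lt_of_mul_lt_mul_right this
  obtain ⟨q, hqdef⟩ : ∃ q, q = c - k := ⟨c - k, rfl⟩
  have e4 : q * x = b := by
    have h := Nat.sub_mul c k x
    rw [e3, e1, ← hqdef] at h
    omega
  have hq0 : 0 < q := by omega
  have e5 : a = q * y := by
    have hmb : m * (n - m + 1) = q * y * n := by
      rw [← hb, ← e4, ← e2, ← e3]; ring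
    rw [ha, hmb, Nat.mul_div_cancel _ hn0]
  have e6 : d = q := by
    rw [hd, e5, ← e4, Nat.gcd_mul_left, hcop.symm.gcd_eq_one, Nat.mul_one]
  have e7 : p = k := by omega
  have hm2 : 2 < m := by
    rcases Nat.lt_or_ge m 3 with h | h
    · have hm2' : m = 2 := by omega
      subst hm2'
      have : n ∣ 2 := by simpa using hmm
      have := Nat.le_of_dvd (by norm_num) this
      omega
    · omega
  have ha1 : 1 < a := by
    rcases Nat.lt_or_ge a 2 with h | h
    · have ha0 : 0 < a := by
        rw [e5]; exact Nat.mul_pos hq0 hy0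
      have ha1' : a = 1 := by omega
      rw [ha1'] at e5
      have hqy1 : q * y = 1 := e5.symm
      have hq1 : q = 1 := by
        have := Nat.le_of_dvd Nat.one_pos ⟨y, hqy1.symm⟩
        omega
      have hy1 : y = 1 := by
        have : y ∣ 1 := ⟨q, by rw [Nat.mul_comm]; exact hqy1.symm⟩
        have := Nat.le_of_dvd Nat.one_pos this
        omega
      rw [hy1, Nat.mul_one] at e2
      have hkm : k = m - 1 := by omega
      have hxeq : x = 1 := by
        have : k * x = k * 1 := by rw [e1, Nat.mul_one, hkm]
        exact Nat.eq_of_mul_eq_mul_left hk0 this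
      rw [hxeq, Nat.mul_one] at e3
      omega
    · exact h
  -- product facts for omega
  have h1 : k * (x - y) = k * x - k * y := by
    rw [Nat.mul_comm, Nat.sub_mul, Nat.mul_comm x k, Nat.mul_comm y k]
  have h2 : k * y ≤ k * x := Nat.mul_le_mul (le_refl k) (le_of_lt hyx)
  have h3 : q * y = c * y - k * y := by rw [hqdef, Nat.sub_mul]
  have h4 : q * y < q * x := mul_lt_mul_of_pos_left hyx hq0
  have hq1c : q + 1 ≤ c := by omega
  have h5 : (q + 1) * x ≤ c * x := Nat.mul_le_mul hq1c (le_refl x)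
  have h5' : (q + 1) * x = q * x + x := by ring
  have h6 : (q + 1) * y ≤ c * y := Nat.mul_le_mul hq1c (le_refl y)
  have h6' : (q + 1) * y = q * y + y := by ring
  have h7 : c * (y + 1) ≤ c * x := Nat.mul_le_mul (le_refl c) hyx
  have h7' : c * (y + 1) = c * y + c := by ring
  have h8 : q * (y + 1) ≤ q * x := Nat.mul_le_mul (le_refl q) hyx
  have h8' : q * (y + 1) = q * y + q := by ring
  have h9 : c * 1 ≤ c * y := Nat.mul_le_mul (le_refl c) hy0
  have h9' : c * 1 = c := by ring
  have h10 : q * 1 ≤ q * y := Nat.mul_le_mul (le_refl q) hy0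
  have h10' : q * 1 = q := by ring
  refine ⟨⟨?_, ?_, ?_, ?_, ?_⟩, by omega, by omega, by omega, by omega, by omega,
    by omega, by omega, by omega, by omega, by omega, by omega, by omega, by omega,
    by omega, by omega, by omega⟩
  · rw [e7]; omega
  · rw [e7]; omega
  · rw [e7, e6, Nat.mul_comm y q]; omega
  · rw [e7, e5]; omega
  · rw [e7, e5]; omega
end

section
/- Let n, m be positive integers such that 1 < m < n and n divides m·(n−m+1). Let a = m·(n−m+1)/n, b = n−m+1, c = gcd(n,m), d = gcd(a,b), x = n/c, y = m/c. Then the identity d·x − c·(x−y) = 1 holds, and each of the pairs (c,d), (c,x), and (x, x−y) is coprime. -/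
/-- **Lemma (cd_coprime).** Let `n, m` be positive integers such that `1 < m < n` and
`n` divides `m·(n−m+1)`. Let `a = m·(n−m+1)/n`, `b = n−m+1`, `c = gcd(n,m)`, `d = gcd(a,b)`,
`x = n/c`, `y = m/c`. Then the identity `d·x − c·(x−y) = 1` holds, and each of the pairs
`(c,d)`, `(c,x)` and `(x, x−y)` is coprime. -/
theorem stmt_8 (n m a b c d x y : ℕ) (hm : 1 < m) (hmn : m < n)
    (hdvd : n ∣ m * (n - m + 1))
    (ha : a = m * (n - m + 1) / n) (hb : b = n - m + 1)
    (hc : c = Nat.gcd n m) (hd : d = Nat.gcd a b)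
    (hx : x = n / c) (hy : y = m / c) :
    (d : ℤ) * (x : ℤ) - (c : ℤ) * ((x : ℤ) - (y : ℤ)) = 1 ∧
    Nat.Coprime c d ∧ Nat.Coprime c x ∧ Nat.Coprime x (x - y) := by
  have hn0 : 0 < n := by omega
  have hc0 : 0 < c := by rw [hc]; exact Nat.gcd_pos_of_pos_left _ hn0
  have hcn : c ∣ n := hc ▸ Nat.gcd_dvd_left n m
  have hcm : c ∣ m := hc ▸ Nat.gcd_dvd_right n m
  have hnx : n = c * x := by rw [hx, Nat.mul_div_cancel' hcn]
  have hmy : m = c * y := by rw [hy, Nat.mul_div_cancel' hcm]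
  have hxy : Nat.Coprime x y := by
    rw [hx, hy, hc]; exact Nat.coprime_div_gcd_div_gcd (hc ▸ hc0)
  have hyx : y < x := by
    by_contra h
    push_neg at h
    have : c * x ≤ c * y := Nat.mul_le_mul_left c h
    omega
  have hxb : x ∣ b := by
    have h1 : c * x ∣ c * (y * b) := by
      rw [← mul_assoc, ← hnx, ← hmy, hb]; exact hdvd
    have h2 : x ∣ y * b := (mul_dvd_mul_iff_left hc0.ne').mp h1
    exact hxy.dvd_of_dvd_mul_left h2
  obtain ⟨k, hk⟩ := hxb
  have hak : a = y * k := by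
    rw [ha, ← hb, hmy, hnx, hk, show c * y * (x * k) = y * k * (c * x) by ring,
      Nat.mul_div_cancel _ (Nat.mul_pos hc0 (by omega))]
  have hdk : d = k := by
    rw [hd, hak, hk, mul_comm x k, mul_comm y k, Nat.gcd_mul_left,
      Nat.Coprime.gcd_eq_one hxy.symm, mul_one]
  have hkey : d * x = c * (x - y) + 1 := by
    rw [hdk, mul_comm k x, ← hk, hb, hnx, hmy, Nat.mul_sub]
  have hgcd1 : ∀ g : ℕ, g ∣ d * x → g ∣ c * (x - y) → g = 1 := by
    intro g h1 h2
    have := Nat.dvd_sub h1 h2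
    rw [hkey] at this
    simpa using this
  refine ⟨?_, ?_, ?_, ?_⟩
  · have := hkey
    have hle : y ≤ x := hyx.le
    zify [hle] at this
    linarith
  · exact hgcd1 _ ((Nat.gcd_dvd_right c d).mul_right x)
      ((Nat.gcd_dvd_left c d).mul_right _)
  · exact hgcd1 _ ((Nat.gcd_dvd_right c x).mul_left d)
      ((Nat.gcd_dvd_left c x).mul_right _)
  · exact hgcd1 _ ((Nat.gcd_dvd_left x (x - y)).mul_left d)
      ((Nat.gcd_dvd_right x (x - y)).mul_left c)
end

section
/- For every pair of coprime positive integers (c,d) with 0 < d < c, there exist infinitely many pairs of coprime positive integers (x,y) with 0 < y < x satisfying d·x − c·(x−y) = 1, and for every such pair (x,y), setting n = x·c, m = y·c, a = y·d, b = x·d, one has b = n − m + 1 and there exists an (a,b)-regular bipartite graph of order (n,m). -/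
/-- There exists an `(a,b)`-regular bipartite graph of order `(n,m)`: a set of edges
between color classes `U` (of size `n`) and `V` (of size `m`) such that every vertex of `U`
has degree `a` and every vertex of `V` has degree `b`. -/
def ExistsBiregular (n m a b : ℕ) : Prop :=
  ∃ E : Finset (Fin n × Fin m),
    (∀ u : Fin n, (E.filter (fun e => e.1 = u)).card = a) ∧
    (∀ v : Fin m, (E.filter (fun e => e.2 = v)).card = b)

lemma count_mod (m b v : ℕ) (hv : v < m) :
    ((Finset.range (m * b)).filter (fun j => j % m = v)).card = b := by
  have hm : 0 < m := lt_of_le_of_lt (Nat.zero_le v) hv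
  have key : ((Finset.range (m * b)).filter (fun j => j % m = v)).card
      = (Finset.range b).card := by
    apply Finset.card_bij' (fun j _ => j / m) (fun q _ => q * m + v)
    · intro j hj
      simp only [Finset.mem_filter, Finset.mem_range] at hj ⊢
      exact Nat.div_lt_of_lt_mul hj.1
    · intro q hq
      simp only [Finset.mem_filter, Finset.mem_range] at hq ⊢
      refine ⟨?_, ?_⟩
      · calc q * m + v < q * m + m := by omega
          _ = (q + 1) * m := by ring
          _ ≤ b * m := Nat.mul_le_mul_right m hq
          _ = m * b := mul_comm _ _
      · rw [mul_comm, Nat.mul_add_mod, Nat.mod_eq_of_lt hv]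
    · intro j hj
      simp only [Finset.mem_filter, Finset.mem_range] at hj
      rw [← hj.2, mul_comm]
      exact Nat.div_add_mod j m
    · intro q _
      rw [mul_comm, Nat.mul_add_div hm, Nat.div_eq_of_lt hv, add_zero]
  rw [key, Finset.card_range]

lemma key_inj {m a : ℕ} (ham : a ≤ m) (x : ℕ) {k1 k2 : ℕ} (h1 : k1 < a) (h2 : k2 < a)
    (h : (x + k1) % m = (x + k2) % m) : k1 = k2 := by
  have h' : k1 % m = k2 % m := Nat.ModEq.add_left_cancel' x h
  rwa [Nat.mod_eq_of_lt (h1.trans_le ham), Nat.mod_eq_of_lt (h2.trans_le ham)] at h'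

lemma existsBiregular_of (n m a b : ℕ) (hm : 0 < m) (ha : 0 < a) (ham : a ≤ m)
    (h : n * a = m * b) : ExistsBiregular n m a b := by
  refine ⟨Finset.univ.filter (fun e : Fin n × Fin m =>
      ∃ k : Fin a, (e.1.val * a + k.val) % m = e.2.val), ?_, ?_⟩
  · intro u
    have key := Finset.card_bij
      (s := (Finset.univ : Finset (Fin a)))
      (t := (Finset.univ.filter (fun e : Fin n × Fin m =>
        ∃ k : Fin a, (e.1.val * a + k.val) % m = e.2.val)).filter (fun e => e.1 = u))
      (fun k _ => ((u, ⟨(u.val * a + k.val) % m, Nat.mod_lt _ hm⟩) : Fin n × Fin m))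
      (by
        intro k _
        simp only [Finset.mem_filter, Finset.mem_univ, true_and]
        exact ⟨⟨k, rfl⟩, trivial⟩)
      (by
        intro k1 _ k2 _ hkk
        have h2 := congrArg (fun e : Fin n × Fin m => e.2.val) hkk
        simp only at h2
        exact Fin.ext (key_inj ham (u.val * a) k1.isLt k2.isLt h2))
      (by
        intro e he
        simp only [Finset.mem_filter, Finset.mem_univ, true_and] at he
        obtain ⟨⟨k, hk⟩, hu⟩ := he
        refine ⟨k, Finset.mem_univ k, ?_⟩
        subst hu
        exact Prod.ext rfl (Fin.ext hk))
    simpa using key.symm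
  · intro v
    have c1 := Finset.card_bij
      (s := Finset.univ.filter (fun p : Fin n × Fin a =>
        (p.1.val * a + p.2.val) % m = v.val))
      (t := (Finset.univ.filter (fun e : Fin n × Fin m =>
        ∃ k : Fin a, (e.1.val * a + k.val) % m = e.2.val)).filter (fun e => e.2 = v))
      (fun p _ => ((p.1, v) : Fin n × Fin m))
      (by
        intro p hp
        simp only [Finset.mem_filter, Finset.mem_univ, true_and] at hp ⊢
        exact ⟨⟨p.2, hp⟩, trivial⟩)
      (by
        intro p1 hp1 p2 hp2 hpp
        simp only [Finset.mem_filter, Finset.mem_univ, true_and] at hp1 hp2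
        have hpp' : ((p1.1, v) : Fin n × Fin m) = (p2.1, v) := hpp
        have hu : p1.1 = p2.1 := by injection hpp'
        have hk : p1.2 = p2.2 := by
          apply Fin.ext
          apply key_inj ham (p1.1.val * a) p1.2.isLt p2.2.isLt
          rw [hp1]
          rw [hu]
          rw [hp2]
        exact Prod.ext hu hk)
      (by
        intro e he
        simp only [Finset.mem_filter, Finset.mem_univ, true_and] at he
        obtain ⟨⟨k, hk⟩, hv⟩ := he
        refine ⟨(e.1, k), ?_, ?_⟩
        · simp only [Finset.mem_filter, Finset.mem_univ, true_and]
          rw [hk, hv]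
        · show ((e.1, v) : Fin n × Fin m) = e
          rw [← hv])
    have c2 : (Finset.univ.filter (fun p : Fin n × Fin a =>
        (p.1.val * a + p.2.val) % m = v.val)).card
        = ((Finset.range (m * b)).filter (fun j => j % m = v.val)).card := by
      apply Finset.card_bij (fun p _ => p.1.val * a + p.2.val)
      · intro p hp
        simp only [Finset.mem_filter, Finset.mem_univ, true_and] at hp
        simp only [Finset.mem_filter, Finset.mem_range]
        refine ⟨?_, hp⟩
        calc p.1.val * a + p.2.val < p.1.val * a + a := by omega
          _ = (p.1.val + 1) * a := by ring
          _ ≤ n * a := Nat.mul_le_mul_right a p.1.isLt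
          _ = m * b := h
      · intro p1 _ p2 _ hpp
        have hu : p1.1.val = p2.1.val := by
          rcases lt_trichotomy p1.1.val p2.1.val with hlt | heq | hgt
          · exfalso
            have h1 : (p1.1.val + 1) * a ≤ p2.1.val * a := Nat.mul_le_mul_right a hlt
            have h2 := p1.2.isLt
            nlinarith [p2.2.isLt]
          · exact heq
          · exfalso
            have h1 : (p2.1.val + 1) * a ≤ p1.1.val * a := Nat.mul_le_mul_right a hgt
            have h2 := p2.2.isLt
            nlinarith [p1.2.isLt]
        have hma : p1.1.val * a = p2.1.val * a := by rw [hu]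
        have hk : p1.2.val = p2.2.val := by omega
        exact Prod.ext (Fin.ext hu) (Fin.ext hk)
      · intro j hj
        simp only [Finset.mem_filter, Finset.mem_range] at hj
        have hjval : (j / a) * a + j % a = j := by
          rw [mul_comm]; exact Nat.div_add_mod j a
        refine ⟨(⟨j / a, ?_⟩, ⟨j % a, Nat.mod_lt _ ha⟩), ?_, ?_⟩
        · exact Nat.div_lt_of_lt_mul (by rw [mul_comm a n, h]; exact hj.1)
        · simp only [Finset.mem_filter, Finset.mem_univ, true_and]
          rw [hjval, hj.2]
        · exact hjval
    rw [← c1, c2, count_mod m b v.val v.isLt]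

lemma cop_of_eq (c d x y : ℕ) (h : (d:ℤ) * x - c * ((x:ℤ) - y) = 1) : Nat.Coprime x y := by
  have h1 : ((Nat.gcd x y : ℕ) : ℤ) ∣ (x : ℤ) := Int.natCast_dvd_natCast.mpr (Nat.gcd_dvd_left x y)
  have h2 : ((Nat.gcd x y : ℕ) : ℤ) ∣ (y : ℤ) := Int.natCast_dvd_natCast.mpr (Nat.gcd_dvd_right x y)
  have hdvd : ((Nat.gcd x y : ℕ) : ℤ) ∣ 1 := by
    rw [← h]
    exact dvd_sub (h1.mul_left _) ((dvd_sub h1 h2).mul_left _)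
  have : Nat.gcd x y ∣ 1 := Int.natCast_dvd_natCast.mp (by exact_mod_cast hdvd)
  exact Nat.dvd_one.mp this

lemma base_sol (c d : ℕ) (hd : 0 < d) (hdc : d < c) (hcop : Nat.Coprime c d) :
    ∃ x0 y0 : ℕ, 2 ≤ y0 ∧ (c:ℤ) * y0 - ((c:ℤ) - d) * x0 = 1 := by
  set e : ℕ := c - d with he
  have hepos : 0 < e := by omega
  have hed : (e : ℤ) = (c : ℤ) - d := by push_cast [he]; omega
  have hcope : Nat.Coprime c e := by
    have hg : Nat.gcd c e ∣ d := by
      have : Nat.gcd c e ∣ c - e := Nat.dvd_sub (Nat.gcd_dvd_left c e) (Nat.gcd_dvd_right c e)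
      simpa [he, Nat.sub_sub_self hdc.le] using this
    have : Nat.gcd c e ∣ Nat.gcd c d := Nat.dvd_gcd (Nat.gcd_dvd_left c e) hg
    rw [hcop] at this
    exact Nat.dvd_one.mp this
  have hbez : (1 : ℤ) = c * Nat.gcdA c e + e * Nat.gcdB c e := by
    have := Nat.gcd_eq_gcd_ab c e
    rwa [hcope, Nat.cast_one] at this
  set A : ℤ := Nat.gcdA c e with hA
  set B : ℤ := Nat.gcdB c e with hB
  have hene : (e : ℤ) ≠ 0 := by exact_mod_cast hepos.ne'
  have hmod : (0:ℤ) ≤ A % e := Int.emod_nonneg A hene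
  set y0 : ℕ := (A % e).toNat + 2 * e with hy0
  have hy0cast : (y0 : ℤ) = A % e + 2 * e := by
    rw [hy0]; push_cast [Int.toNat_of_nonneg hmod]; ring
  have hy0ge : 2 ≤ y0 := by omega
  have hAmod : A % e = A - e * (A / e) := by rw [Int.emod_def]
  set t : ℤ := 2 * c - B - c * (A / e) with ht
  have hkey : (c:ℤ) * y0 - 1 = e * t := by
    rw [hy0cast, hAmod, ht]
    linear_combination -hbez
  have hcy : (0:ℤ) < (c:ℤ) * y0 - 1 := by
    have hc2 : (2:ℤ) ≤ c := by exact_mod_cast (by omega : 2 ≤ c)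
    have : (2:ℤ) ≤ (y0:ℤ) := by exact_mod_cast hy0ge
    nlinarith
  have hepos' : (0:ℤ) < e := by exact_mod_cast hepos
  have htnn : 0 ≤ t := by nlinarith [hkey]
  refine ⟨t.toNat, y0, hy0ge, ?_⟩
  rw [← hed, Int.toNat_of_nonneg htnn]
  linarith [hkey]

/-- **Proposition (cd_existence).** For any coprime positive integers `(c,d)` with
`0 < d < c`, there exist infinitely many coprime positive integer pairs `(x,y)` with
`0 < y < x` satisfying `d·x − c·(x−y) = 1`; and for every such pair, setting `n = x·c`,
`m = y·c`, `a = y·d`, `b = x·d`, one has `b = n − m + 1` and there exists an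
`(a,b)`-regular bipartite graph of order `(n,m)`. -/
theorem stmt_10 (c d : ℕ) (hd : 0 < d) (hdc : d < c) (hcop : Nat.Coprime c d) :
    {p : ℕ × ℕ | 0 < p.2 ∧ p.2 < p.1 ∧ Nat.Coprime p.1 p.2 ∧
      (d : ℤ) * (p.1 : ℤ) - (c : ℤ) * ((p.1 : ℤ) - (p.2 : ℤ)) = 1}.Infinite ∧
    (∀ x y : ℕ, 0 < y → y < x → Nat.Coprime x y →
      (d : ℤ) * (x : ℤ) - (c : ℤ) * ((x : ℤ) - (y : ℤ)) = 1 →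
      x * d = x * c - y * c + 1 ∧ ExistsBiregular (x * c) (y * c) (y * d) (x * d)) := by
  have hc : 0 < c := hd.trans hdc
  constructor
  · obtain ⟨x0, y0, hy0, hsol⟩ := base_sol c d hd hdc hcop
    refine Set.infinite_of_injective_forall_mem
      (f := fun t : ℕ => ((x0 + t * c, y0 + t * (c - d)) : ℕ × ℕ)) ?_ ?_
    · intro t1 t2 h12
      have h1 : x0 + t1 * c = x0 + t2 * c := congrArg Prod.fst h12
      have h2 : t1 * c = t2 * c := by omega
      exact Nat.eq_of_mul_eq_mul_right hc h2
    · intro t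
      set X : ℕ := x0 + t * c with hX
      set Y : ℕ := y0 + t * (c - d) with hY
      have hcd : ((c - d : ℕ) : ℤ) = (c:ℤ) - d := by
        push_cast [Nat.cast_sub hdc.le]; ring
      have hYcast : (Y:ℤ) = y0 + t * ((c:ℤ) - d) := by
        rw [hY]; push_cast [hcd]; ring
      have hXcast : (X:ℤ) = x0 + t * c := by rw [hX]; push_cast; ring
      have heq : (d : ℤ) * X - (c : ℤ) * ((X:ℤ) - Y) = 1 := by
        rw [hXcast, hYcast]
        linear_combination hsol
      have hYpos : 0 < Y := by omega
      have hY2 : (2:ℤ) ≤ (Y:ℤ) := by exact_mod_cast (by omega : 2 ≤ Y)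
      have hdZ : (1:ℤ) ≤ d := by exact_mod_cast hd
      have hdcZ : (d:ℤ) < c := by exact_mod_cast hdc
      have h3 : ((c:ℤ) - d) * ((X:ℤ) - Y) = (d:ℤ) * Y - 1 := by linear_combination -heq
      have hYX : Y < X := by
        have : (Y:ℤ) < X := by nlinarith
        exact_mod_cast this
      exact ⟨hYpos, hYX, cop_of_eq c d X Y heq, heq⟩
  · intro x y hy hyx hcopxy heq
    have hyc : y * c ≤ x * c := Nat.mul_le_mul_right c hyx.le
    constructor
    · zify [hyc]
      linear_combination heq
    · apply existsBiregular_of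
      · exact Nat.mul_pos hy hc
      · exact Nat.mul_pos hy hd
      · exact Nat.mul_le_mul le_rfl hdc.le
      · ring
end

section
/- Let a be an integer with a ≥ 2. Let a = d·y be any factorization of a into positive integers, and let a − 1 = p·z be any factorization of a−1 into positive integers. Then, setting x = z + y, b = d·x, c = d + p, n = c·x, m = c·y, one has b = n − m + 1 and there exists an (a,b)-regular bipartite graph of order (n,m). -/
lemma card_zmod_val_lt (c d : ℕ) [NeZero c] (hd : d ≤ c) :
    (Finset.univ.filter (fun γ : ZMod c => γ.val < d)).card = d := by
  have himg : Finset.univ.filter (fun γ : ZMod c => γ.val < d)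
      = (Finset.range d).image (fun k : ℕ => (k : ZMod c)) := by
    ext γ
    simp only [Finset.mem_filter, Finset.mem_univ, true_and, Finset.mem_image,
      Finset.mem_range]
    constructor
    · intro h
      exact ⟨γ.val, h, ZMod.natCast_rightInverse γ⟩
    · rintro ⟨k, hk, rfl⟩
      rwa [ZMod.val_cast_of_lt (lt_of_lt_of_le hk hd)]
  have hinj : Set.InjOn (fun k : ℕ => (k : ZMod c)) (Finset.range d) := by
    intro k hk l hl hkl
    simp only [Finset.coe_range, Set.mem_Iio] at hk hl
    have h4 := congrArg ZMod.val hkl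
    rwa [ZMod.val_cast_of_lt (lt_of_lt_of_le hk hd),
      ZMod.val_cast_of_lt (lt_of_lt_of_le hl hd)] at h4
  rw [himg, Finset.card_image_of_injOn hinj, Finset.card_range]

lemma card_zmod_add (c d : ℕ) [NeZero c] (hd : d ≤ c) (i : ZMod c) :
    (Finset.univ.filter (fun β : ZMod c => (i + β).val < d)).card = d := by
  have h : Finset.univ.filter (fun β : ZMod c => (i + β).val < d)
      = (Finset.univ.filter (fun γ : ZMod c => γ.val < d)).image (fun γ => γ - i) := by
    ext β
    simp only [Finset.mem_filter, Finset.mem_univ, true_and, Finset.mem_image]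
    constructor
    · intro h
      exact ⟨i + β, h, by ring⟩
    · rintro ⟨γ, h, rfl⟩
      rwa [show i + (γ - i) = γ by ring]
  rw [h, Finset.card_image_of_injective _ sub_left_injective,
    card_zmod_val_lt c d hd]

lemma card_range_cast (c : ℕ) [NeZero c] (Q : ZMod c → Prop) [DecidablePred Q] :
    ((Finset.range c).filter (fun j : ℕ => Q (j : ZMod c))).card
      = (Finset.univ.filter Q).card := by
  have himg : (((Finset.range c).filter (fun j : ℕ => Q (j : ZMod c))).image
      (fun j : ℕ => (j : ZMod c))) = Finset.univ.filter Q := by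
    ext γ
    simp only [Finset.mem_image, Finset.mem_filter, Finset.mem_univ, true_and,
      Finset.mem_range]
    constructor
    · rintro ⟨j, ⟨hj, hQ⟩, rfl⟩
      exact hQ
    · intro h
      exact ⟨γ.val, ⟨γ.val_lt, by rwa [ZMod.natCast_rightInverse γ]⟩,
        ZMod.natCast_rightInverse γ⟩
  have hinj : Set.InjOn (fun j : ℕ => (j : ZMod c))
      ((Finset.range c).filter (fun j : ℕ => Q (j : ZMod c))) := by
    intro k hk l hl hkl
    simp only [Finset.coe_filter, Finset.mem_range, Set.mem_setOf_eq] at hk hl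
    have h4 := congrArg ZMod.val hkl
    rwa [ZMod.val_cast_of_lt hk.1, ZMod.val_cast_of_lt hl.1] at h4
  rw [← himg, Finset.card_image_of_injOn hinj]

lemma card_fin_div (c y : ℕ) (hy : 0 < y) (P : ℕ → Prop) [DecidablePred P] :
    (Finset.univ.filter (fun v : Fin (c * y) => P (v.val / y))).card
      = ((Finset.range c).filter P).card * y := by
  have hval : ∀ p : Fin c × Fin y, ((finProdFinEquiv p : Fin (c * y)) : ℕ) / y = p.1.val := by
    intro p
    have h1 : ((finProdFinEquiv p : Fin (c * y)) : ℕ) = p.2.val + y * p.1.val := by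
      simp [finProdFinEquiv]
    rw [h1, Nat.add_mul_div_left _ _ hy, Nat.div_eq_of_lt p.2.is_lt, zero_add]
  have him : Finset.univ.filter (fun v : Fin (c * y) => P (v.val / y))
      = (Finset.univ.filter (fun p : Fin c × Fin y => P p.1.val)).map
          finProdFinEquiv.toEmbedding := by
    ext v
    simp only [Finset.mem_filter, Finset.mem_univ, true_and, Finset.mem_map,
      Equiv.coe_toEmbedding]
    constructor
    · intro h
      refine ⟨finProdFinEquiv.symm v, ?_, Equiv.apply_symm_apply _ _⟩
      have h2 := hval (finProdFinEquiv.symm v)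
      rw [Equiv.apply_symm_apply] at h2
      rwa [h2] at h
    · rintro ⟨p, hp, rfl⟩
      rwa [hval]
  rw [him, Finset.card_map]
  have hprod : (Finset.univ.filter (fun p : Fin c × Fin y => P p.1.val))
      = (Finset.univ.filter (fun j : Fin c => P j.val)) ×ˢ (Finset.univ : Finset (Fin y)) := by
    ext p
    simp [Finset.mem_product]
  rw [hprod, Finset.card_product, Finset.card_univ, Fintype.card_fin]
  congr 1
  rw [Finset.card_filter, Finset.card_filter]
  exact Fin.sum_univ_eq_sum_range (fun i => if P i then 1 else 0) c

lemma existsBiregular_aux (c x y d : ℕ) (hc : 0 < c) (hx : 0 < x) (hy : 0 < y)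
    (hd : d ≤ c) : ExistsBiregular (c * x) (c * y) (d * y) (d * x) := by
  haveI : NeZero c := ⟨hc.ne'⟩
  refine ⟨Finset.univ.filter (fun e : Fin (c * x) × Fin (c * y) =>
      (((e.1.val / x + e.2.val / y : ℕ) : ZMod c)).val < d), ?_, ?_⟩
  · intro u
    have h1 : ((Finset.univ.filter (fun e : Fin (c * x) × Fin (c * y) =>
          (((e.1.val / x + e.2.val / y : ℕ) : ZMod c)).val < d)).filter
            (fun e => e.1 = u))
        = (Finset.univ.filter (fun v : Fin (c * y) =>
            (((u.val / x + v.val / y : ℕ) : ZMod c)).val < d)).map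
              ⟨fun v => (u, v), fun v w h => by simpa using h⟩ := by
      ext e
      simp only [Finset.mem_filter, Finset.mem_univ, true_and, Finset.mem_map,
        Function.Embedding.coeFn_mk]
      constructor
      · rintro ⟨h, rfl⟩
        exact ⟨e.2, h, rfl⟩
      · rintro ⟨v, hv, rfl⟩
        exact ⟨hv, rfl⟩
    rw [h1, Finset.card_map]
    rw [card_fin_div c y hy (fun j => (((u.val / x + j : ℕ) : ZMod c)).val < d)]
    have h2 : ((Finset.range c).filter
          (fun j => (((u.val / x + j : ℕ) : ZMod c)).val < d)).card = d := by
      have h3 : ∀ j : ℕ, (((u.val / x + j : ℕ) : ZMod c)) =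
          ((u.val / x : ℕ) : ZMod c) + (j : ZMod c) := by
        intro j; push_cast; ring
      simp only [h3]
      rw [card_range_cast c (fun γ => (((u.val / x : ℕ) : ZMod c) + γ).val < d)]
      exact card_zmod_add c d hd _
    rw [h2]
  · intro v
    have h1 : ((Finset.univ.filter (fun e : Fin (c * x) × Fin (c * y) =>
          (((e.1.val / x + e.2.val / y : ℕ) : ZMod c)).val < d)).filter
            (fun e => e.2 = v))
        = (Finset.univ.filter (fun u : Fin (c * x) =>
            (((u.val / x + v.val / y : ℕ) : ZMod c)).val < d)).map
              ⟨fun u => (u, v), fun u w h => by simpa using h⟩ := by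
      ext e
      simp only [Finset.mem_filter, Finset.mem_univ, true_and, Finset.mem_map,
        Function.Embedding.coeFn_mk]
      constructor
      · rintro ⟨h, rfl⟩
        exact ⟨e.1, h, rfl⟩
      · rintro ⟨u, hu, rfl⟩
        exact ⟨hu, rfl⟩
    rw [h1, Finset.card_map]
    rw [card_fin_div c x hx (fun j => (((j + v.val / y : ℕ) : ZMod c)).val < d)]
    have h2 : ((Finset.range c).filter
          (fun j => (((j + v.val / y : ℕ) : ZMod c)).val < d)).card = d := by
      have h3 : ∀ j : ℕ, (((j + v.val / y : ℕ) : ZMod c)) =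
          ((v.val / y : ℕ) : ZMod c) + (j : ZMod c) := by
        intro j; push_cast; ring
      simp only [h3]
      rw [card_range_cast c (fun γ => (((v.val / y : ℕ) : ZMod c) + γ).val < d)]
      exact card_zmod_add c d hd _
    rw [h2]

/-- **Proposition (a_existence).** Let `a ≥ 2` be an integer, let `a = d·y` be a
factorization into positive integers, and let `a − 1 = p·z` be a factorization into
positive integers. Then, setting `x = z + y`, `b = d·x`, `c = d + p`, `n = c·x`,
`m = c·y`, one has `b = n − m + 1` and there exists an `(a,b)`-regular bipartite graph
of order `(n,m)`. -/
theorem stmt_12 (a d y p z : ℕ) (ha : 2 ≤ a) (hd : 0 < d) (hy : 0 < y)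
    (hp : 0 < p) (hz : 0 < z)
    (hfac : a = d * y) (hfac' : a - 1 = p * z) :
    d * (z + y) = (d + p) * (z + y) - (d + p) * y + 1 ∧
    ExistsBiregular ((d + p) * (z + y)) ((d + p) * y) a (d * (z + y)) := by
  constructor
  · rw [show (d + p) * (z + y) = (d + p) * z + (d + p) * y from by ring,
      Nat.add_sub_cancel]
    have h2 : p * z + 1 = a := by rw [← hfac']; omega
    calc d * (z + y) = d * z + d * y := by ring
      _ = d * z + a := by rw [← hfac]
      _ = d * z + (p * z + 1) := by rw [← h2]
      _ = (d + p) * z + 1 := by ring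
  · have h := existsBiregular_aux (d + p) (z + y) y d (by omega) (by omega) hy (by omega)
    rwa [← hfac] at h
end

section
/- Let n, m, k be positive integers such that 1 < m < n, k = n − m, b = n − m + 1, and a = m·(n−m+1)/n is an integer. Then the graph G₁ given by Construction 1 is k-critical bipartite if and only if gcd(n,m) = m (i.e., m divides n). -/
/-- A bipartite graph of order `(n,m)` (with `n > m`), given by its adjacency relation
`E : Fin n → Fin m → Prop`, is `k`-critical bipartite (for `k = n − m`) if for every subset
`U'` of the larger color class with `|U'| = m`, the induced subgraph `G[U',V]` has a perfect
matching, i.e. there is an injection `f : V → U'` with `f v` adjacent to `v` for all `v`. -/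
def IsKCriticalBipartite (n m : ℕ) (E : Fin n → Fin m → Prop) : Prop :=
  ∀ U' : Finset (Fin n), U'.card = m →
    ∃ f : Fin m → Fin n, Function.Injective f ∧ ∀ v : Fin m, f v ∈ U' ∧ E (f v) v

/-- Adjacency of Construction 1: with `c = gcd(n,m)`, `x = n/c`, `y = m/c`, vertex `u_i`
is adjacent to the vertices `v_{(⌊i/x⌋·y+α) mod m}` for `α ∈ {0,…,a−1}`. -/
def cons1Adj (n m a : ℕ) (u : Fin n) (v : Fin m) : Prop :=
  ∃ α < a, ((u : ℕ) / (n / Nat.gcd n m) * (m / Nat.gcd n m) + α) % m = (v : ℕ)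

/-!
If `m ∣ n`, the vertex `u_i` lies in block `j = ⌊i/x⌋` (`x = n/m`), of size `x`, and is joined to
the cyclic arc `v_j, …, v_{j+a-1}`. So for nonempty `S ⊆ V` the blocks meeting `N(S)` are those
of `S - [0, a)` in `ℤ/m`, a set of size at least `min(m, |S| + a - 1)`: adding one more shift
enlarges a proper subset of `ℤ/m`, as `1` generates it. With `a·x = n - m + 1` this gives
`|N(S)| ≥ |S| + (n - m)`, which is Hall's condition in every `m`-subset of `U` simultaneously.

Otherwise `y = m/gcd(n,m) ≥ 2`, and since `x = n/gcd(n,m)` is coprime to `y`, `a = q·y` with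
`q·x = n - m + 1`. The vertices `u_i` with `i ≥ q·x` lie in blocks `j ≥ q`, whose arcs start at
`j·y ≥ a` and, if they wrap around, end below `a - y`; so they miss `v_{a-y}, …, v_{a-1}`,
and in the `m`-set `{u_0} ∪ {u_i : i ≥ q·x}` these `y ≥ 2` vertices have the single
neighbour `u_0`.
-/

open Finset

theorem IsKCriticalBipartite.of_card_add_le {n m : ℕ} (E : Fin n → Fin m → Prop) [DecidableRel E]
    (h : ∀ S : Finset (Fin m), S.Nonempty → #S + (n - m) ≤ #{u | ∃ v ∈ S, E u v}) :
    IsKCriticalBipartite n m E := by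
  intro U hU
  have hall : ∀ S : Finset (Fin m), #S ≤ #(S.biUnion fun v => {u ∈ U | E u v}) := by
    intro S
    obtain rfl | hS := S.eq_empty_or_nonempty
    · simp
    set N : Finset (Fin n) := {u | ∃ v ∈ S, E u v}
    have hN : S.biUnion (fun v => {u ∈ U | E u v}) = U ∩ N := by
      ext u
      simp only [N, mem_biUnion, mem_filter, mem_inter, mem_univ, true_and]
      tauto
    have hSm : #S ≤ m := by simpa using card_le_univ S
    have hUN := card_union_add_card_inter U N
    have hn : #(U ∪ N) ≤ n := by simpa using card_le_univ (U ∪ N)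
    have hNS : #S + (n - m) ≤ #N := h S hS
    rw [hN]
    omega
  obtain ⟨f, hf, hfU⟩ := (all_card_le_biUnion_card_iff_exists_injective _).mp hall
  exact ⟨f, hf, fun v => by simpa using hfU v⟩

theorem IsKCriticalBipartite.eq_of_forall_adj_eq {n m : ℕ} {E : Fin n → Fin m → Prop}
    (hE : IsKCriticalBipartite n m E) {U : Finset (Fin n)} (hU : #U = m) {u₀ : Fin n}
    {v₁ v₂ : Fin m} (h₁ : ∀ u ∈ U, E u v₁ → u = u₀) (h₂ : ∀ u ∈ U, E u v₂ → u = u₀) :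
    v₁ = v₂ := by
  obtain ⟨f, hf, hfU⟩ := hE U hU
  exact hf <| (h₁ _ (hfU v₁).1 (hfU v₁).2).trans (h₂ _ (hfU v₂).1 (hfU v₂).2).symm

namespace ZMod

variable {m : ℕ} [NeZero m]

theorem finEquiv_apply (v : Fin m) : finEquiv m v = ((v : ℕ) : ZMod m) := by
  obtain ⟨k, rfl⟩ := Nat.exists_eq_succ_of_ne_zero (NeZero.ne m)
  exact (Fin.cast_val_eq_self v).symm

theorem natCast_fin_injective : Function.Injective fun v : Fin m => ((v : ℕ) : ZMod m) := by
  simpa only [← finEquiv_apply] using (finEquiv m).injective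

theorem eq_univ_of_forall_sub_one_mem {T : Finset (ZMod m)} (hT : T.Nonempty)
    (h : ∀ t ∈ T, t - 1 ∈ T) : T = univ := by
  obtain ⟨t, ht⟩ := hT
  have hsub : ∀ k : ℕ, t - k ∈ T := by
    intro k
    induction k with
    | zero => simpa using ht
    | succ k ih => simpa [sub_sub] using h _ ih
  exact eq_univ_of_forall fun z => by simpa using hsub (t - z).val

theorem min_card_add_le_card_filter_exists_add_mem {S : Finset (ZMod m)} (hS : S.Nonempty)
    (a : ℕ) : min m (#S + a) ≤ #{z : ZMod m | ∃ α ≤ a, z + α ∈ S} := by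
  induction a with
  | zero => simp
  | succ a ih =>
    set T : Finset (ZMod m) := {z : ZMod m | ∃ α ≤ a, z + α ∈ S}
    set T' : Finset (ZMod m) := {z : ZMod m | ∃ α ≤ a + 1, z + α ∈ S}
    have hTT' : T ⊆ T' := by
      intro z
      simp only [T, T', mem_filter, mem_univ, true_and]
      exact fun ⟨α, hα, hz⟩ => ⟨α, by omega, hz⟩
    have hT'm : #T' ≤ m := by simpa using card_le_univ T'
    by_cases hT : T = univ
    · have : #T' = m := by simp [univ_subset_iff.1 (hT ▸ hTT')]
      omega
    have hST : S ⊆ T := fun s hs => mem_filter.2 ⟨mem_univ s, 0, Nat.zero_le a, by simpa using hs⟩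
    obtain ⟨t, htT, ht⟩ : ∃ t ∈ T, t - 1 ∉ T := by
      by_contra! hclosed
      exact hT (eq_univ_of_forall_sub_one_mem (hS.mono hST) hclosed)
    have hins : insert (t - 1) T ⊆ T' := by
      refine insert_subset ?_ hTT'
      simp only [T, T', mem_filter, mem_univ, true_and] at htT ⊢
      obtain ⟨α, hα, hz⟩ := htT
      exact ⟨α + 1, by omega, by simpa [add_comm, add_sub_assoc] using hz⟩
    have := card_le_card hins
    rw [card_insert_of_notMem ht] at this
    omega

theorem card_filter_div_mem {x : ℕ} (A : Finset (ZMod m)) :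
    #{u : Fin (m * x) | (((u : ℕ) / x : ℕ) : ZMod m) ∈ A} = #A * x := by
  have hA : #{v : Fin m | ((v : ℕ) : ZMod m) ∈ A} = #A :=
    card_equiv (finEquiv m).toEquiv fun v => by simp [finEquiv_apply]
  have hprod : #{u : Fin (m * x) | (((u : ℕ) / x : ℕ) : ZMod m) ∈ A} =
      #(({v : Fin m | ((v : ℕ) : ZMod m) ∈ A} : Finset (Fin m)) ×ˢ (univ : Finset (Fin x))) :=
    card_equiv finProdFinEquiv.symm fun u => by simp
  rw [hprod, card_product, card_fin, hA]

end ZMod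

theorem cons1Adj_iff_natCast {n m a : ℕ} (u : Fin n) (v : Fin m) :
    cons1Adj n m a u v ↔ ∃ α < a,
      (((u : ℕ) / (n / n.gcd m) * (m / n.gcd m) + α : ℕ) : ZMod m) = ((v : ℕ) : ZMod m) := by
  simp only [cons1Adj, ZMod.natCast_eq_natCast_iff', Nat.mod_eq_of_lt v.isLt]

theorem isKCriticalBipartite_cons1Adj_of_dvd {n m a : ℕ} (hm : 0 < m) (hdvd : m ∣ n)
    (ha : a * n = m * (n - m + 1)) : IsKCriticalBipartite n m (cons1Adj n m a) := by
  classical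
  have : NeZero m := ⟨hm.ne'⟩
  obtain ⟨x, rfl⟩ := hdvd
  obtain ⟨a, rfl⟩ := Nat.exists_eq_add_one_of_ne_zero (n := a) (by rintro rfl; simp at ha; omega)
  have hax : (a + 1) * x = m * x - m + 1 := by
    refine Nat.eq_of_mul_eq_mul_left hm ?_
    rw [← ha]; ring
  refine IsKCriticalBipartite.of_card_add_le _ fun S hS => ?_
  set ι : Fin m → ZMod m := fun v => ((v : ℕ) : ZMod m)
  set A : Finset (ZMod m) := {z : ZMod m | ∃ α ≤ a, z + α ∈ S.image ι}
  have hN : #{u | ∃ v ∈ S, cons1Adj (m * x) m (a + 1) u v} =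
      #{u : Fin (m * x) | (((u : ℕ) / x : ℕ) : ZMod m) ∈ A} := by
    refine congr_arg card (filter_congr fun u _ => ?_)
    simp only [cons1Adj_iff_natCast, Nat.gcd_mul_right_left, Nat.mul_div_cancel_left _ hm,
      Nat.div_self hm, mul_one, Nat.lt_succ_iff, A, mem_filter, mem_univ, true_and, mem_image, ι]
    push_cast
    constructor
    · rintro ⟨v, hv, α, hα, h⟩
      exact ⟨α, hα, v, hv, h.symm⟩
    · rintro ⟨α, hα, v, hv, h⟩
      exact ⟨v, hv, α, hα, h.symm⟩
  have hSm : #S ≤ m := by simpa using card_le_univ S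
  have hA : min m (#S + a) ≤ #A := by
    have := ZMod.min_card_add_le_card_filter_exists_add_mem (hS.image ι) a
    rwa [card_image_of_injective S ZMod.natCast_fin_injective] at this
  have hS1 : 1 ≤ #S := hS.card_pos
  have hx : 1 ≤ x := Nat.one_le_iff_ne_zero.2 fun hx => by simp [hx] at hax
  rw [hN, ZMod.card_filter_div_mem]
  rcases le_total m (#S + a) with h | h
  · calc #S + (m * x - m) ≤ m * x := by have := Nat.le_mul_of_pos_right m hx; omega
      _ ≤ #A * x := Nat.mul_le_mul_right x (by omega)
  · calc #S + (m * x - m) ≤ (#S - 1) * x + (a + 1) * x := by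
          have := Nat.le_mul_of_pos_right (#S - 1) hx; omega
      _ = (#S + a) * x := by rw [← add_mul]; congr 1; omega
      _ ≤ #A * x := Nat.mul_le_mul_right x (by omega)

theorem exists_eq_mul_div_gcd {n m a : ℕ} (hm : 0 < m) (ha : a * n = m * (n - m + 1)) :
    ∃ q, a = q * (m / n.gcd m) ∧ q * (n / n.gcd m) = n - m + 1 := by
  have hc : 0 < n.gcd m := Nat.gcd_pos_of_pos_right n hm
  have hy : 0 < m / n.gcd m := Nat.div_pos (Nat.gcd_le_right n hm) hc
  have hax : a * (n / n.gcd m) = m / n.gcd m * (n - m + 1) := by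
    refine Nat.eq_of_mul_eq_mul_left hc ?_
    rw [mul_left_comm, Nat.mul_div_cancel' (Nat.gcd_dvd_left n m), ha, ← mul_assoc,
      Nat.mul_div_cancel' (Nat.gcd_dvd_right n m)]
  obtain ⟨q, rfl⟩ : m / n.gcd m ∣ a :=
    (Nat.coprime_div_gcd_div_gcd hc).symm.dvd_of_dvd_mul_right (Dvd.intro _ hax.symm)
  refine ⟨q, mul_comm _ _, Nat.eq_of_mul_eq_mul_left hy ?_⟩
  rw [← hax, mul_assoc]

theorem mod_lt_sub_or_le_mod {j y m α a : ℕ} (hj : a ≤ j * y) (hjm : j * y + y ≤ m) (hα : α < a) :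
    (j * y + α) % m < a - y ∨ a ≤ (j * y + α) % m := by
  rcases lt_or_ge (j * y + α) m with h | h
  · rw [Nat.mod_eq_of_lt h]
    omega
  · rw [Nat.mod_eq_sub_mod h, Nat.mod_eq_of_lt (by omega)]
    omega

theorem not_cons1Adj_of_mul_div_gcd_le {n m a q : ℕ} (haq : a = q * (m / n.gcd m)) {u : Fin n}
    (hu : q * (n / n.gcd m) ≤ u) {v : Fin m} (hv₁ : a - m / n.gcd m ≤ v) (hv₂ : v < a) :
    ¬ cons1Adj n m a u v := by
  rintro ⟨α, hα, huv⟩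
  set c := n.gcd m
  set x := n / c
  set y := m / c
  have hc : 0 < c := Nat.gcd_pos_of_pos_left m (Nat.zero_lt_of_lt u.isLt)
  have hnx : c * x = n := Nat.mul_div_cancel' (Nat.gcd_dvd_left n m)
  have hmy : c * y = m := Nat.mul_div_cancel' (Nat.gcd_dvd_right n m)
  have hx : 0 < x := Nat.pos_of_mul_pos_left (hnx ▸ Nat.zero_lt_of_lt u.isLt)
  have hqj : q ≤ u / x := (Nat.le_div_iff_mul_le hx).2 hu
  have hjc : u / x < c := Nat.div_lt_of_lt_mul (by rw [mul_comm, hnx]; exact u.isLt)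
  have := mod_lt_sub_or_le_mod (m := m) (haq ▸ Nat.mul_le_mul_right y hqj)
    (by rw [← hmy, ← Nat.succ_mul]; exact Nat.mul_le_mul_right y hjc) hα
  omega

theorem gcd_eq_right_of_isKCriticalBipartite_cons1Adj {n m a : ℕ} (hm : 0 < m) (hmn : m ≤ n)
    (ha : a * n = m * (n - m + 1)) (hG : IsKCriticalBipartite n m (cons1Adj n m a)) :
    n.gcd m = m := by
  obtain ⟨q, haq, hqx⟩ := exists_eq_mul_div_gcd hm ha
  set c := n.gcd m
  set x := n / c
  set y := m / c
  have hnx : c * x = n := Nat.mul_div_cancel' (Nat.gcd_dvd_left n m)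
  have hmy : c * y = m := Nat.mul_div_cancel' (Nat.gcd_dvd_right n m)
  by_contra hcm
  have hy : 2 ≤ y := by rcases y with _ | _ | y <;> omega
  have hx : 0 < x := Nat.pos_of_mul_pos_left (hnx ▸ (by omega : 0 < n))
  have hq : 0 < q := Nat.pos_of_ne_zero fun hq => by simp [hq] at hqx
  have hqc : q ≤ c := Nat.le_of_mul_le_mul_right (by rw [hqx, hnx]; omega) hx
  have hqn : q * x < n := by
    have := Nat.mul_le_mul_left c hy
    omega
  let u₀ : Fin n := ⟨0, by omega⟩
  let U : Finset (Fin n) := insert u₀ (Ici ⟨q * x, hqn⟩)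
  have hU : #U = m := by
    rw [card_insert_of_notMem (by simp [u₀, Fin.le_def]; omega), Fin.card_Ici, Fin.val_mk]
    omega
  have hwindow : ∀ v : Fin m, a - y ≤ v → v < a → ∀ u ∈ U, cons1Adj n m a u v → u = u₀ := by
    intro v hv₁ hv₂ u hu huv
    obtain rfl | hu := mem_insert.1 hu
    · rfl
    exact absurd huv (not_cons1Adj_of_mul_div_gcd_le haq (by simpa [Fin.le_def] using hu) hv₁ hv₂)
  have hay : y ≤ a := haq ▸ Nat.le_mul_of_pos_left y hq
  have ham : a ≤ m := haq ▸ hmy ▸ mul_comm c y ▸ Nat.mul_le_mul_right y hqc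
  have hv := hG.eq_of_forall_adj_eq hU (hwindow ⟨a - y, by omega⟩ le_rfl (by simp; omega))
    (hwindow ⟨a - 1, by omega⟩ (by simp; omega) (by simp; omega))
  simp only [Fin.mk.injEq] at hv
  omega

theorem stmt_15_general (n m a : ℕ) (hm : 1 < m) (hmn : m < n)
    (ha : a * n = m * (n - m + 1)) :
    IsKCriticalBipartite n m (cons1Adj n m a) ↔ Nat.gcd n m = m :=
  ⟨gcd_eq_right_of_isKCriticalBipartite_cons1Adj (by omega) hmn.le ha,
    fun h => isKCriticalBipartite_cons1Adj_of_dvd (by omega) (h ▸ Nat.gcd_dvd_left n m) ha⟩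

/-- **Observation (kcons1).** Let `n, m, k` be positive integers such that `1 < m < n`,
`k = n − m`, `b = n − m + 1`, and `a = m·(n−m+1)/n` is an integer. Then the graph `G₁`
given by Construction 1 is `k`-critical bipartite if and only if `gcd(n,m) = m`. -/
theorem stmt_15 (n m k a b : ℕ) (hm : 1 < m) (hmn : m < n)
    (hk : k = n - m) (hb : b = n - m + 1) (ha : a * n = m * (n - m + 1)) :
    IsKCriticalBipartite n m (cons1Adj n m a) ↔ Nat.gcd n m = m :=
  stmt_15_general n m a hm hmn ha
end

section
/- Let n, m, k be positive integers such that 1 < m < n, k = n − m, b = n − m + 1, and a = m·(n−m+1)/n is an integer. Then there exists an (a,b)-regular bipartite graph of order (n,m) that is NOT k-critical bipartite if and only if a < m − 1. -/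
open Finset

theorem card_filter_fst_eq {α β : Type*} [DecidableEq α] [DecidableEq β] [Fintype β]
    (E : Finset (α × β)) (a : α) :
    (E.filter fun e => e.1 = a).card = (univ.filter fun b => (a, b) ∈ E).card := by
  rw [← card_map (.sectR a β)]
  congr 1
  ext ⟨x, y⟩
  simp only [mem_filter, mem_map, mem_univ, true_and, Function.Embedding.sectR_apply,
    Prod.mk.injEq]
  constructor
  · rintro ⟨h, rfl⟩; exact ⟨y, h, rfl, rfl⟩
  · rintro ⟨y, h, rfl, rfl⟩; exact ⟨h, rfl⟩

theorem card_filter_snd_eq {α β : Type*} [DecidableEq α] [DecidableEq β] [Fintype α]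
    (E : Finset (α × β)) (b : β) :
    (E.filter fun e => e.2 = b).card = (univ.filter fun a => (a, b) ∈ E).card := by
  rw [← card_map (.sectL α b)]
  congr 1
  ext ⟨x, y⟩
  simp only [mem_filter, mem_map, mem_univ, true_and, Function.Embedding.sectL_apply,
    Prod.mk.injEq]
  constructor
  · rintro ⟨h, rfl⟩; exact ⟨x, h, rfl, rfl⟩
  · rintro ⟨x, h, rfl, rfl⟩; exact ⟨h, rfl⟩

theorem card_filter_sigma_fst_eq {n : ℕ} (d : Fin n → ℕ) (u : Fin n) :
    (univ.filter fun x : (u : Fin n) × Fin (d u) => x.1 = u).card = d u := by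
  rw [show (univ.filter fun x : (u : Fin n) × Fin (d u) => x.1 = u) = univ.map (.sigmaMk u) by
    ext ⟨u', t⟩
    simp only [mem_filter, mem_univ, true_and, mem_map, Function.Embedding.sigmaMk_apply]
    constructor
    · rintro rfl; exact ⟨t, rfl⟩
    · rintro ⟨t, h⟩; exact (congrArg Sigma.fst h).symm]
  simp

theorem card_filter_modNat_eq {c q : ℕ} (v : Fin q) :
    (univ.filter fun p : Fin (c * q) => p.modNat = v).card = c := by
  rw [card_equiv finProdFinEquiv.symm (t := univ ×ˢ {v}) (by simp [eq_comm])]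
  simp

/-- Fill the `q` columns cyclically, row after row: the edges at `u` get consecutive positions,
and position `p < c * q` goes to column `p % q`. -/
theorem exists_bipartite_of_degrees_le_of_sum_eq {n q c : ℕ} (d : Fin n → ℕ)
    (hd : ∀ u, d u ≤ q) (hsum : ∑ u, d u = c * q) :
    ∃ E : Finset (Fin n × Fin q),
      (∀ u, (E.filter fun e => e.1 = u).card = d u) ∧
      ∀ v, (E.filter fun e => e.2 = v).card = c := by
  let pos : ((u : Fin n) × Fin (d u)) ≃ Fin (c * q) := finSigmaFinEquiv.trans (finCongr hsum)
  let edge : ((u : Fin n) × Fin (d u)) → Fin n × Fin q := fun x => (x.1, (pos x).modNat)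
  have edge_inj : Function.Injective edge := by
    rintro ⟨u, t⟩ ⟨u', t'⟩ h
    simp only [edge, Prod.mk.injEq] at h
    obtain ⟨rfl, h⟩ := h
    have h := congrArg Fin.val h
    simp only [pos, Fin.coe_modNat, Equiv.trans_apply, finCongr_apply, Fin.val_cast,
      finSigmaFinEquiv_apply] at h
    have ht : t.val = t'.val := by
      have := Nat.ModEq.add_left_cancel' _ h
      rwa [Nat.ModEq, Nat.mod_eq_of_lt (t.2.trans_le (hd u)),
        Nat.mod_eq_of_lt (t'.2.trans_le (hd u))] at this
    rw [Fin.ext ht]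
  refine ⟨univ.map ⟨edge, edge_inj⟩, fun u => ?_, fun v => ?_⟩
  · rw [filter_map, card_map]
    exact card_filter_sigma_fst_eq d u
  · rw [filter_map, card_map, ← card_filter_modNat_eq (c := c) v]
    exact card_equiv pos (by simp [edge])

theorem or_of_card_sub_one_le_card_filter {α : Type*} [Fintype α] [DecidableEq α]
    {p : α → Prop} [DecidablePred p] (hp : Fintype.card α - 1 ≤ (univ.filter p).card)
    {v w : α} (hvw : v ≠ w) : p v ∨ p w := by
  by_contra! h
  have hsub : univ.filter p ⊆ {v, w}ᶜ := fun x hx => by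
    simp only [mem_filter, mem_univ, true_and] at hx
    simp only [mem_compl, mem_insert, mem_singleton, not_or]
    exact ⟨fun h' => h.1 (h' ▸ hx), fun h' => h.2 (h' ▸ hx)⟩
  have hcard := card_le_card hsub
  rw [card_compl, card_pair hvw] at hcard
  have : 2 ≤ Fintype.card α := Fintype.one_lt_card_iff_nontrivial.mpr ⟨v, w, hvw⟩
  omega

theorem isKCriticalBipartite_of_le_degrees {n m : ℕ} (r : Fin n → Fin m → Prop)
    [DecidableRel r]
    (hU : ∀ u, m - 1 ≤ (univ.filter (r u)).card)
    (hV : ∀ v, n - m + 1 ≤ (univ.filter (r · v)).card) :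
    IsKCriticalBipartite n m r := by
  classical
  intro U' hU'
  suffices hall : ∀ A : Finset (Fin m), A.card ≤ (A.biUnion fun v => U'.filter (r · v)).card by
    obtain ⟨f, hf_inj, hf⟩ := (all_card_le_biUnion_card_iff_exists_injective _).mp hall
    exact ⟨f, hf_inj, fun v => by simpa using hf v⟩
  intro A
  obtain rfl | hA := A.eq_empty_or_nonempty
  · simp
  obtain ⟨v, rfl⟩ | ⟨v, hv, w, hw, hvw⟩ := hA.exists_eq_singleton_or_nontrivial
  · have hsub : univ.filter (r · v) ⊆ U'.filter (r · v) ∪ U'ᶜ := fun u hu => by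
      by_cases h : u ∈ U' <;> simp_all
    have := (hV v).trans ((card_le_card hsub).trans (card_union_le _ _))
    rw [card_compl, Fintype.card_fin, hU'] at this
    simp only [singleton_biUnion, card_singleton]
    omega
  · have hsub : U' ⊆ A.biUnion fun v => U'.filter (r · v) := fun u hu => by
      have := or_of_card_sub_one_le_card_filter (by simpa using hU u) hvw
      rcases this with h | h
      · exact mem_biUnion.mpr ⟨v, hv, mem_filter.mpr ⟨hu, h⟩⟩
      · exact mem_biUnion.mpr ⟨w, hw, mem_filter.mpr ⟨hu, h⟩⟩
    calc A.card ≤ m := by simpa using card_le_univ A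
      _ = U'.card := hU'.symm
      _ ≤ _ := card_le_card hsub

theorem sum_ite_lt_sub_two_eq {n q a b : ℕ} (hn : n = b + q + 1) (hab : a * n = (q + 2) * b)
    (ha : 2 ≤ a) : ∑ u : Fin n, (if u.val < b then a - 2 else a) = b * q := by
  rw [sum_ite, sum_const, sum_const, filter_not, card_sdiff_of_subset (filter_subset _ _),
    Fin.card_filter_val_lt]
  simp only [card_univ, Fintype.card_fin, smul_eq_mul]
  obtain ⟨a, rfl⟩ := Nat.exists_eq_add_of_le' ha
  subst hn
  rw [min_eq_right (by omega), show b + q + 1 - b = q + 1 by omega, Nat.add_sub_cancel]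
  linarith

theorem exists_not_isKCriticalBipartite {n q a b : ℕ} (hn : n = b + q + 1)
    (hab : a * n = (q + 2) * b) (ha : 2 ≤ a) (haq : a ≤ q) :
    ∃ E : Finset (Fin n × Fin (q + 2)),
      (∀ u, (E.filter fun e => e.1 = u).card = a) ∧
      (∀ v, (E.filter fun e => e.2 = v).card = b) ∧
      ¬ IsKCriticalBipartite n (q + 2) (fun u v => (u, v) ∈ E) := by
  classical
  have hb : 0 < b := Nat.pos_of_ne_zero (by rintro rfl; simp [hn] at hab; omega)
  obtain ⟨P, hProw, hPcol⟩ := exists_bipartite_of_degrees_le_of_sum_eq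
    (fun u : Fin n => if u.val < b then a - 2 else a) (fun u => by split_ifs <;> omega)
    (sum_ite_lt_sub_two_eq hn hab ha)
  let r : Fin n → Fin (q + 2) → Prop := fun u =>
    Fin.cons (u.val < b) (Fin.cons (u.val < b) fun w => (u, w) ∈ P)
  refine ⟨univ.filter fun e => r e.1 e.2, fun u => ?_, fun v => ?_, ?_⟩
  · rw [card_filter_fst_eq]
    simp only [mem_filter, mem_univ, true_and]
    rw [Fin.card_filter_univ_succ', Fin.card_filter_univ_succ']
    simp only [r, Fin.cons_zero, Fin.cons_succ, ← card_filter_fst_eq, hProw]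
    split_ifs <;> omega
  · rw [card_filter_snd_eq]
    simp only [mem_filter, mem_univ, true_and]
    cases v using Fin.cases with
    | zero => simp [r, Fin.card_filter_val_lt]; omega
    | succ v =>
      cases v using Fin.cases with
      | zero => simp [r, Fin.card_filter_val_lt]; omega
      | succ w => simp [r, ← card_filter_snd_eq, hPcol]
  · intro hcrit
    obtain ⟨f, hf_inj, hf⟩ := hcrit (univ.filter fun u : Fin n => u.val < b - 1)ᶜ
      (by rw [card_compl, Fin.card_filter_val_lt]; simp; omega)
    have hf0 : (f 0).val = b - 1 := by have := hf 0; simp [r] at this; omega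
    have hf1 : (f 1).val = b - 1 := by have := hf 1; simp [r] at this; omega
    exact zero_ne_one (hf_inj (Fin.ext (hf0.trans hf1.symm)))

theorem stmt_16_general (n m a b : ℕ) (hmn : m < n)
    (hb : b = n - m + 1) (ha : a * n = m * (n - m + 1)) :
    (∃ E : Finset (Fin n × Fin m),
      (∀ u : Fin n, (E.filter (fun e => e.1 = u)).card = a) ∧
      (∀ v : Fin m, (E.filter (fun e => e.2 = v)).card = b) ∧
      ¬ IsKCriticalBipartite n m (fun u v => (u, v) ∈ E)) ↔ a < m - 1 := by
  constructor
  · rintro ⟨E, hrow, hcol, hE⟩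
    by_contra! h
    refine hE (isKCriticalBipartite_of_le_degrees _ (fun u => ?_) (fun v => ?_))
    · rw [← card_filter_fst_eq, hrow]; exact h
    · rw [← card_filter_snd_eq, hcol, hb]
  · intro h
    obtain ⟨q, rfl⟩ : ∃ q, m = q + 2 := ⟨m - 2, by omega⟩
    have two_le_a : 2 ≤ a := by
      obtain ⟨k, rfl⟩ : ∃ k, n = q + 2 + k + 1 := ⟨n - (q + 3), by omega⟩
      rw [show q + 2 + k + 1 - (q + 2) + 1 = k + 2 by omega] at ha
      -- `a ≤ 1` would give `n ≥ m * (n - m + 1) > n`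
      by_contra! ha2
      interval_cases a <;> nlinarith
    exact exists_not_isKCriticalBipartite (by omega) (by rw [ha, hb]) two_le_a (by omega)

/-- **Theorem (main_negative).** Let `n, m, k` be positive integers such that `1 < m < n`,
`k = n − m`, `b = n − m + 1`, and `a = m·(n−m+1)/n` is an integer. Then there exists an
`(a,b)`-regular bipartite graph of order `(n,m)` that is NOT `k`-critical bipartite
if and only if `a < m − 1`. -/
theorem stmt_16 (n m k a b : ℕ) (hm : 1 < m) (hmn : m < n)
    (hk : k = n - m) (hb : b = n - m + 1) (ha : a * n = m * (n - m + 1)) :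
    (∃ E : Finset (Fin n × Fin m),
      (∀ u : Fin n, (E.filter (fun e => e.1 = u)).card = a) ∧
      (∀ v : Fin m, (E.filter (fun e => e.2 = v)).card = b) ∧
      ¬ IsKCriticalBipartite n m (fun u v => (u, v) ∈ E)) ↔ a < m - 1 :=
  stmt_16_general n m a b hmn hb ha
end

section
/- Let n, m, k be positive integers such that 1 < m < n, k = n − m, b = n − m + 1, and a = m·(n−m+1)/n is an integer. Then there exists an (a,b)-regular bipartite graph of order (n,m) that is k-critical bipartite. -/
open Finset

/-- Auxiliary: two naturals with the same residue mod `n` that are within `n`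
of each other are equal. -/
lemma aux_mod_inj (n x y : ℕ) (h : x % n = y % n) (h1 : x < y + n) (h2 : y < x + n) :
    x = y := by
  rcases Nat.eq_zero_or_pos n with rfl | hn
  · simpa using h
  have hx := Nat.div_add_mod x n
  have hy := Nat.div_add_mod y n
  have hq : x / n = y / n := by
    rcases Nat.lt_trichotomy (x / n) (y / n) with hlt | heq | hgt
    · exfalso
      have h3 : n * (x / n + 1) ≤ n * (y / n) := Nat.mul_le_mul_left n hlt
      rw [Nat.mul_add, Nat.mul_one] at h3
      omega
    · exact heq
    · exfalso
      have h3 : n * (y / n + 1) ≤ n * (x / n) := Nat.mul_le_mul_left n hgt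
      rw [Nat.mul_add, Nat.mul_one] at h3
      omega
  rw [hq] at hx
  omega

/-- Auxiliary: the basic mod shift computation. -/
lemma aux_mod_shift (n sv j : ℕ) (hsv : sv < n) (hj : j < n) :
    ((sv + j) % n + n - sv) % n = j := by
  rcases Nat.lt_or_ge (sv + j) n with h | h
  · rw [Nat.mod_eq_of_lt h]
    have e : sv + j + n - sv = j + n := by omega
    rw [e, Nat.add_mod_right, Nat.mod_eq_of_lt hj]
  · have e1 : (sv + j) % n = sv + j - n := by
      rw [Nat.mod_eq_sub_mod h, Nat.mod_eq_of_lt (by omega)]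
    have e2 : sv + j - n + n - sv = j := by omega
    rw [e1, e2, Nat.mod_eq_of_lt hj]

/-- Cardinality of an upper filter on `Fin m`. -/
lemma aux_card_upper (m t : ℕ) :
    ((Finset.univ : Finset (Fin m)).filter fun v => t ≤ v.val).card = m - t := by
  rw [← Nat.card_Ico t m]
  apply Finset.card_bij (fun v _ => v.val)
  · intro v hv
    simp only [Finset.mem_filter, Finset.mem_univ, true_and] at hv
    exact Finset.mem_Ico.mpr ⟨hv, v.isLt⟩
  · intro v _ v' _ h
    exact Fin.val_injective h
  · intro x hx
    obtain ⟨h1, h2⟩ := Finset.mem_Ico.mp hx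
    exact ⟨⟨x, h2⟩, by simp [h1], rfl⟩

/-- `c ≤ ⌊v n / m⌋` iff `⌈c m / n⌉ ≤ v`. -/
lemma aux_thresh_iff (n m c : ℕ) (hn : 0 < n) (hm : 0 < m) (v : ℕ) :
    c ≤ v * n / m ↔ (c * m + (n - 1)) / n ≤ v := by
  rw [Nat.le_div_iff_mul_le hm, Nat.div_le_iff_le_mul_add_pred hn, Nat.mul_comm n v]
  omega

lemma aux_card_ge (n m c : ℕ) (hn : 0 < n) (hm : 0 < m) :
    ((Finset.univ : Finset (Fin m)).filter fun v => c ≤ v.val * n / m).card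
      = m - (c * m + (n - 1)) / n := by
  have e : ((Finset.univ : Finset (Fin m)).filter fun v => c ≤ v.val * n / m)
      = (Finset.univ : Finset (Fin m)).filter fun v => (c * m + (n - 1)) / n ≤ v.val :=
    Finset.filter_congr (fun v _ => aux_thresh_iff n m c hn hm v.val)
  rw [e]
  exact aux_card_upper m _

/-- `⌈(c + d·n) m ... ⌉` additivity. -/
lemma aux_tt_add (n x d : ℕ) (hn : 0 < n) :
    (x + d * n + (n - 1)) / n = (x + (n - 1)) / n + d := by
  have e : x + d * n + (n - 1) = (x + (n - 1)) + d * n := by ring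
  rw [e, Nat.add_mul_div_right _ _ hn]

lemma aux_tt_mono (n : ℕ) (x y : ℕ) (h : x ≤ y) :
    (x + (n - 1)) / n ≤ (y + (n - 1)) / n :=
  Nat.div_le_div_right (by omega)

lemma aux_tt_top (n m : ℕ) (hn : 0 < n) : (n * m + (n - 1)) / n = m := by
  have e : n * m + (n - 1) = (n - 1) + m * n := by ring
  rw [e, Nat.add_mul_div_right _ _ hn, Nat.div_eq_of_lt (by omega)]
  omega

/-- Degree of a vertex `v` in the larger class: each `v` has `b` neighbours. -/
lemma aux_deg_v (n b sv : ℕ) (hn : 0 < n) (hbn : b ≤ n) (hsv : sv < n) :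
    ((Finset.univ : Finset (Fin n)).filter fun u => (u.val + n - sv) % n < b).card = b := by
  have hset : ((Finset.univ : Finset (Fin n)).filter fun u => (u.val + n - sv) % n < b)
      = (Finset.range b).image (fun j => (⟨(sv + j) % n, Nat.mod_lt _ hn⟩ : Fin n)) := by
    ext u
    simp only [Finset.mem_filter, Finset.mem_univ, true_and, Finset.mem_image,
      Finset.mem_range]
    constructor
    · intro h
      refine ⟨(u.val + n - sv) % n, h, ?_⟩
      apply Fin.ext
      show (sv + (u.val + n - sv) % n) % n = u.val
      have e1 : (sv + (u.val + n - sv) % n) % n = (sv + (u.val + n - sv)) % n :=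
        Nat.ModEq.add_left sv (Nat.mod_modEq _ n)
      have e2 : sv + (u.val + n - sv) = u.val + n := by omega
      rw [e1, e2, Nat.add_mod_right, Nat.mod_eq_of_lt u.isLt]
    · rintro ⟨j, hj, rfl⟩
      show ((sv + j) % n + n - sv) % n < b
      rw [aux_mod_shift n sv j hsv (lt_of_lt_of_le hj hbn)]
      exact hj
  rw [hset, Finset.card_image_of_injOn, Finset.card_range]
  intro j hj j' hj' h
  simp only [Finset.coe_range, Set.mem_Iio] at hj hj'
  have h' : (sv + j) % n = (sv + j') % n := congrArg Fin.val h
  have := aux_mod_inj n (sv + j) (sv + j') h' (by omega) (by omega)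
  omega

lemma aux_tt_mul (n d : ℕ) (hn : 0 < n) : (d * n + (n - 1)) / n = d := by
  have e : d * n + (n - 1) = (n - 1) + d * n := by ring
  rw [e, Nat.add_mul_div_right _ _ hn, Nat.div_eq_of_lt (by omega)]
  omega

/-- Degree of a vertex `u` in the larger class: each `u` has `a` neighbours. -/
lemma aux_deg_u (n m a b : ℕ) (hm : 1 < m) (hmn : m < n) (hbn : b ≤ n)
    (hbm : b * m = a * n) (ham : a ≤ m) (hkey : (n - b) * m = (m - a) * n) (u : Fin n) :
    ((Finset.univ : Finset (Fin m)).filter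
      fun v => (u.val + n - v.val * n / m) % n < b).card = a := by
  have hn : 0 < n := by omega
  have hm0 : 0 < m := by omega
  have hu := u.isLt
  have hs : ∀ v : Fin m, v.val * n / m < n := by
    intro v
    rw [Nat.div_lt_iff_lt_mul hm0]
    have := v.isLt
    nlinarith
  have hmod : ∀ v : Fin m, (u.val + n - v.val * n / m) % n
      = if v.val * n / m ≤ u.val then u.val - v.val * n / m
        else u.val + n - v.val * n / m := by
    intro v
    have hsv := hs v
    revert hsv
    generalize v.val * n / m = sv
    intro hsv
    by_cases hle : sv ≤ u.val
    · rw [if_pos hle]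
      have e : u.val + n - sv = (u.val - sv) + n := by omega
      rw [e, Nat.add_mod_right, Nat.mod_eq_of_lt (by omega)]
    · rw [if_neg hle, Nat.mod_eq_of_lt (by omega)]
  by_cases hub : b ≤ u.val + 1
  · -- no wrap-around
    have hiff : ∀ v ∈ (Finset.univ : Finset (Fin m)),
        ((u.val + n - v.val * n / m) % n < b
          ↔ (u.val + 1 - b ≤ v.val * n / m ∧ ¬ (u.val + 1 ≤ v.val * n / m))) := by
      intro v _
      have hsv := hs v
      rw [hmod v]
      revert hsv
      generalize v.val * n / m = sv
      intro hsv
      split_ifs with h <;> omega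
    rw [Finset.filter_congr hiff]
    have hset : ((Finset.univ : Finset (Fin m)).filter
          fun v => (u.val + 1 - b ≤ v.val * n / m ∧ ¬ (u.val + 1 ≤ v.val * n / m)))
        = ((Finset.univ : Finset (Fin m)).filter fun v => u.val + 1 - b ≤ v.val * n / m)
          \ ((Finset.univ : Finset (Fin m)).filter fun v => u.val + 1 ≤ v.val * n / m) := by
      ext v
      simp only [Finset.mem_filter, Finset.mem_sdiff, Finset.mem_univ, true_and]
    rw [hset, Finset.card_sdiff_of_subset (by
      intro v hv
      simp only [Finset.mem_filter, Finset.mem_univ, true_and] at *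
      omega)]
    rw [aux_card_ge n m _ hn hm0, aux_card_ge n m _ hn hm0]
    have h1 : (u.val + 1) * m = (u.val + 1 - b) * m + b * m := by
      rw [← Nat.add_mul, Nat.sub_add_cancel hub]
    have ht2 : ((u.val + 1) * m + (n - 1)) / n
        = ((u.val + 1 - b) * m + (n - 1)) / n + a := by
      have e0 : (u.val + 1) * m + (n - 1) = ((u.val + 1 - b) * m + (n - 1)) + a * n := by
        omega
      rw [e0, Nat.add_mul_div_right _ _ hn]
    have ht3 : ((u.val + 1) * m + (n - 1)) / n ≤ m := by
      have h6 := aux_tt_mono n ((u.val + 1) * m) (n * m) (by nlinarith)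
      rw [aux_tt_top n m hn] at h6
      exact h6
    have ht1 : ((u.val + 1 - b) * m + (n - 1)) / n ≤ ((u.val + 1) * m + (n - 1)) / n :=
      aux_tt_mono n _ _ (by omega)
    generalize hg1 : ((u.val + 1) * m + (n - 1)) / n = t1 at ht2 ht3 ht1 ⊢
    generalize hg0 : ((u.val + 1 - b) * m + (n - 1)) / n = t0 at ht2 ht1 ⊢
    omega
  · -- wrap-around
    have hiff : ∀ v ∈ (Finset.univ : Finset (Fin m)),
        ((u.val + n - v.val * n / m) % n < b
          ↔ (¬ (u.val + 1 ≤ v.val * n / m) ∨ (u.val + 1 + n - b ≤ v.val * n / m))) := by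
      intro v _
      have hsv := hs v
      rw [hmod v]
      revert hsv
      generalize v.val * n / m = sv
      intro hsv
      split_ifs with h <;> omega
    rw [Finset.filter_congr hiff]
    have hset : ((Finset.univ : Finset (Fin m)).filter
          fun v => (¬ (u.val + 1 ≤ v.val * n / m) ∨ (u.val + 1 + n - b ≤ v.val * n / m)))
        = ((Finset.univ : Finset (Fin m))
            \ (Finset.univ : Finset (Fin m)).filter (fun v => u.val + 1 ≤ v.val * n / m))
          ∪ ((Finset.univ : Finset (Fin m)).filter
              fun v => u.val + 1 + n - b ≤ v.val * n / m) := by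
      ext v
      simp only [Finset.mem_filter, Finset.mem_union, Finset.mem_sdiff, Finset.mem_univ,
        true_and]
    have hdisj : Disjoint
        ((Finset.univ : Finset (Fin m))
          \ (Finset.univ : Finset (Fin m)).filter (fun v => u.val + 1 ≤ v.val * n / m))
        ((Finset.univ : Finset (Fin m)).filter
          fun v => u.val + 1 + n - b ≤ v.val * n / m) := by
      rw [Finset.disjoint_left]
      intro x hx hx'
      simp only [Finset.mem_filter, Finset.mem_sdiff, Finset.mem_univ, true_and] at hx hx'
      omega
    rw [hset, Finset.card_union_of_disjoint hdisj,
      Finset.card_sdiff_of_subset (Finset.filter_subset _ _), Finset.card_univ, Fintype.card_fin,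
      aux_card_ge n m _ hn hm0, aux_card_ge n m _ hn hm0]
    have hd : u.val + 1 + n - b = (u.val + 1) + (n - b) := by omega
    have h1 : (u.val + 1 + n - b) * m = (u.val + 1) * m + (n - b) * m := by
      rw [hd, Nat.add_mul]
    have ht4 : ((u.val + 1 + n - b) * m + (n - 1)) / n
        = ((u.val + 1) * m + (n - 1)) / n + (m - a) := by
      have e0 : (u.val + 1 + n - b) * m + (n - 1)
          = ((u.val + 1) * m + (n - 1)) + (m - a) * n := by
        omega
      rw [e0, Nat.add_mul_div_right _ _ hn]
    have ht5 : ((u.val + 1) * m + (n - 1)) / n ≤ a := by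
      have h6 := aux_tt_mono n ((u.val + 1) * m) (b * m)
        (Nat.mul_le_mul_right m (by omega))
      rw [hbm, aux_tt_mul n a hn] at h6
      exact h6
    generalize hg4 : ((u.val + 1 + n - b) * m + (n - 1)) / n = t4 at ht4 ⊢
    generalize hg1 : ((u.val + 1) * m + (n - 1)) / n = t1 at ht4 ht5 ⊢
    omega

lemma aux_s_lt (n m : ℕ) (hm0 : 0 < m) (hn : 0 < n) (v : Fin m) : v.val * n / m < n := by
  rw [Nat.div_lt_iff_lt_mul hm0]
  have := v.isLt
  nlinarith

lemma aux_s_inj (n m : ℕ) (hmn : m < n) (hm0 : 0 < m) (v w : Fin m)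
    (h : v.val * n / m = w.val * n / m) : v = w := by
  have key : ∀ x y : Fin m, x.val < y.val → x.val * n / m < y.val * n / m := by
    intro x y hxy
    have h1 : x.val * n / m + 1 = (x.val * n + m) / m := (Nat.add_div_right _ hm0).symm
    have h2 : (x.val * n + m) / m ≤ y.val * n / m := by
      apply Nat.div_le_div_right
      have : (x.val + 1) * n = x.val * n + n := by ring
      nlinarith
    omega
  rcases Nat.lt_trichotomy v.val w.val with hlt | heq | hgt
  · exact absurd h (Nat.ne_of_lt (key v w hlt))
  · exact Fin.ext heq
  · exact absurd h.symm (Nat.ne_of_lt (key w v hgt))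

lemma aux_rot (n sv g j : ℕ) (hn : 0 < n) (hsv : sv < n) (hg : g < n) :
    (g + 1 + (n - 1 - (g + n - sv) % n) + j) % n = (sv + j) % n := by
  have hx := Nat.div_add_mod (g + n - sv) n
  have hlt : (g + n - sv) % n < n := Nat.mod_lt _ hn
  generalize hq : (g + n - sv) / n = q at hx
  generalize hd : (g + n - sv) % n = d at hx hlt ⊢
  have e : g + 1 + (n - 1 - d) + j = sv + j + n * q := by omega
  rw [e, Nat.add_mul_mod_self_left]

/-- Abstract union-of-intervals lower bound: if `S` indexes intervals `[σ v, σ v + b)`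
inside `[0,n)` with pairwise distinct left endpoints, all of whose points inject into
a set `A`, then `A` has at least `|S| - 1 + b` elements. -/
lemma aux_union_card {α : Type*} [DecidableEq α] {n b : ℕ} (hn : 0 < n) (hb : 0 < b)
    (S : Finset α) (hS : S.Nonempty) (σ : α → ℕ)
    (hσb : ∀ v ∈ S, σ v + b ≤ n)
    (hσinj : ∀ v ∈ S, ∀ w ∈ S, σ v = σ w → v = w)
    (A : Finset (Fin n)) (ρ : ℕ → Fin n)
    (hρinj : ∀ p, p < n → ∀ q, q < n → ρ p = ρ q → p = q)
    (hmem : ∀ v ∈ S, ∀ j, j < b → ρ (σ v + j) ∈ A) :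
    S.card + b ≤ A.card + 1 := by
  obtain ⟨vm, hvm, hmax⟩ := S.exists_max_image σ hS
  set P : Finset ℕ := (S.erase vm).image σ ∪ Finset.Ico (σ vm) (σ vm + b) with hP
  have hPmem : ∀ p ∈ P, ∃ v ∈ S, ∃ j, j < b ∧ p = σ v + j := by
    intro p hp
    rw [hP, Finset.mem_union] at hp
    rcases hp with hp | hp
    · obtain ⟨v, hv, rfl⟩ := Finset.mem_image.mp hp
      exact ⟨v, Finset.mem_of_mem_erase hv, 0, hb, (Nat.add_zero _).symm⟩
    · rw [Finset.mem_Ico] at hp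
      exact ⟨vm, hvm, p - σ vm, by omega, by omega⟩
  have hPlt : ∀ p ∈ P, p < n := by
    intro p hp
    obtain ⟨v, hv, j, hj, rfl⟩ := hPmem p hp
    have := hσb v hv
    omega
  have hcard1 : P.card ≤ A.card := by
    apply Finset.card_le_card_of_injOn ρ
    · intro p hp
      obtain ⟨v, hv, j, hj, rfl⟩ := hPmem p hp
      exact hmem v hv j hj
    · intro p hp q hq h
      exact hρinj p (hPlt p (by simpa using hp)) q (hPlt q (by simpa using hq)) h
  have hdisj : Disjoint ((S.erase vm).image σ) (Finset.Ico (σ vm) (σ vm + b)) := by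
    rw [Finset.disjoint_left]
    intro x hx hx'
    obtain ⟨v, hv, rfl⟩ := Finset.mem_image.mp hx
    rw [Finset.mem_Ico] at hx'
    have h1 : σ v ≤ σ vm := hmax v (Finset.mem_of_mem_erase hv)
    have h2 : v ≠ vm := Finset.ne_of_mem_erase hv
    have h3 : σ v ≠ σ vm := fun he => h2 (hσinj v (Finset.mem_of_mem_erase hv) vm hvm he)
    omega
  have hcard2 : P.card = (S.erase vm).card + b := by
    rw [hP, Finset.card_union_of_disjoint hdisj, Nat.card_Ico,
      Finset.card_image_of_injOn (fun v hv w hw h =>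
        hσinj v (Finset.mem_of_mem_erase (Finset.mem_coe.mp hv))
          w (Finset.mem_of_mem_erase (Finset.mem_coe.mp hw)) h)]
    omega
  have hcard3 : (S.erase vm).card = S.card - 1 := Finset.card_erase_of_mem hvm
  have hS1 : 1 ≤ S.card := Finset.card_pos.mpr hS
  omega

/-- The Hall condition for the constructed graph. -/
lemma aux_hall (n m b : ℕ) (hm : 1 < m) (hmn : m < n) (hbb : b = n - m + 1)
    (U' : Finset (Fin n)) (hU' : U'.card = m) (S : Finset (Fin m)) :
    S.card ≤ (S.biUnion fun v =>
      U'.filter fun u => (u.val + n - v.val * n / m) % n < b).card := by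
  have hn : 0 < n := by omega
  have hm0 : 0 < m := by omega
  have hb : 0 < b := by omega
  have hbn : b ≤ n := by omega
  rcases S.eq_empty_or_nonempty with rfl | hS
  · simp
  classical
  set A := S.biUnion (fun v => (Finset.univ : Finset (Fin n)).filter
    fun u => (u.val + n - v.val * n / m) % n < b) with hA
  have hBU : (S.biUnion fun v => U'.filter fun u => (u.val + n - v.val * n / m) % n < b)
      = A ∩ U' := by
    ext u
    simp only [hA, Finset.mem_biUnion, Finset.mem_inter, Finset.mem_filter, Finset.mem_univ,
      true_and]
    tauto
  have hineq : A.card ≤ (A ∩ U').card + (n - m) := by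
    have h1 := Finset.card_inter_add_card_sdiff A U'
    have h2 : (A \ U').card ≤ ((Finset.univ : Finset (Fin n)) \ U').card :=
      Finset.card_le_card (Finset.sdiff_subset_sdiff (Finset.subset_univ A) le_rfl)
    have h3 : ((Finset.univ : Finset (Fin n)) \ U').card = n - m := by
      rw [Finset.card_sdiff_of_subset (Finset.subset_univ _), Finset.card_univ, Fintype.card_fin, hU']
    omega
  rw [hBU]
  by_cases hfull : ∀ u : Fin n, u ∈ A
  · have hAU : A ∩ U' = U' := Finset.inter_eq_right.mpr (fun u _ => hfull u)
    rw [hAU, hU']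
    have := Finset.card_le_univ S
    simpa using this
  · push_neg at hfull
    obtain ⟨g, hg⟩ := hfull
    have hgS : ∀ v ∈ S, b ≤ (g.val + n - v.val * n / m) % n := by
      intro v hv
      by_contra hlt
      push_neg at hlt
      exact hg (by
        rw [hA]
        exact Finset.mem_biUnion.mpr
          ⟨v, hv, Finset.mem_filter.mpr ⟨Finset.mem_univ g, hlt⟩⟩)
    have hσb : ∀ v ∈ S, (n - 1 - (g.val + n - v.val * n / m) % n) + b ≤ n := by
      intro v hv
      have h1 := hgS v hv
      have hlt := aux_s_lt n m hm0 hn v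
      generalize hsv : v.val * n / m = sv at h1 hlt ⊢
      have h2 : (g.val + n - sv) % n < n := Nat.mod_lt _ hn
      omega
    have hσinj : ∀ v ∈ S, ∀ w ∈ S,
        (n - 1 - (g.val + n - v.val * n / m) % n)
          = (n - 1 - (g.val + n - w.val * n / m) % n) → v = w := by
      intro v hv w hw hvw
      apply aux_s_inj n m hmn hm0 v w
      have hlv := aux_s_lt n m hm0 hn v
      have hlw := aux_s_lt n m hm0 hn w
      have hgn := g.isLt
      generalize hsv : v.val * n / m = sv at hvw hlv ⊢
      generalize hsw : w.val * n / m = sw at hvw hlw ⊢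
      have h1 : (g.val + n - sv) % n < n := Nat.mod_lt _ hn
      have h2 : (g.val + n - sw) % n < n := Nat.mod_lt _ hn
      have heq : (g.val + n - sv) % n = (g.val + n - sw) % n := by omega
      have h3 := aux_mod_inj n (g.val + n - sv) (g.val + n - sw) heq (by omega) (by omega)
      omega
    have hρinj : ∀ p, p < n → ∀ q, q < n →
        (⟨(g.val + 1 + p) % n, Nat.mod_lt _ hn⟩ : Fin n)
          = (⟨(g.val + 1 + q) % n, Nat.mod_lt _ hn⟩ : Fin n) → p = q := by
      intro p hp q hq h
      have h1 : (g.val + 1 + p) % n = (g.val + 1 + q) % n := congrArg Fin.val h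
      have h2 := aux_mod_inj n (g.val + 1 + p) (g.val + 1 + q) h1 (by omega) (by omega)
      omega
    have hmem : ∀ v ∈ S, ∀ j, j < b →
        (⟨(g.val + 1 + ((n - 1 - (g.val + n - v.val * n / m) % n) + j)) % n,
          Nat.mod_lt _ hn⟩ : Fin n) ∈ A := by
      intro v hv j hj
      have hlt := aux_s_lt n m hm0 hn v
      have hrot := aux_rot n (v.val * n / m) g.val j hn hlt g.isLt
      rw [hA]
      apply Finset.mem_biUnion.mpr
      refine ⟨v, hv, Finset.mem_filter.mpr ⟨Finset.mem_univ _, ?_⟩⟩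
      show ((g.val + 1 + ((n - 1 - (g.val + n - v.val * n / m) % n) + j)) % n
        + n - v.val * n / m) % n < b
      have e : g.val + 1 + ((n - 1 - (g.val + n - v.val * n / m) % n) + j)
          = g.val + 1 + (n - 1 - (g.val + n - v.val * n / m) % n) + j := by omega
      rw [e, hrot, aux_mod_shift n (v.val * n / m) j hlt (lt_of_lt_of_le hj hbn)]
      exact hj
    have key := aux_union_card hn hb S hS
      (fun v => n - 1 - (g.val + n - v.val * n / m) % n) hσb hσinj A
      (fun p => (⟨(g.val + 1 + p) % n, Nat.mod_lt _ hn⟩ : Fin n)) hρinj hmem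
    omega

/-- **Theorem (main_positive).** Let `n, m, k` be positive integers such that `1 < m < n`,
`k = n − m`, `b = n − m + 1`, and `a = m·(n−m+1)/n` is an integer. Then there exists an
`(a,b)`-regular bipartite graph of order `(n,m)` that is `k`-critical bipartite. -/
theorem stmt_17 (n m k a b : ℕ) (hm : 1 < m) (hmn : m < n)
    (hk : k = n - m) (hb : b = n - m + 1) (ha : a * n = m * (n - m + 1)) :
    ∃ E : Finset (Fin n × Fin m),
      (∀ u : Fin n, (E.filter (fun e => e.1 = u)).card = a) ∧
      (∀ v : Fin m, (E.filter (fun e => e.2 = v)).card = b) ∧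
      IsKCriticalBipartite n m (fun u v => (u, v) ∈ E) := by
  have hn : 0 < n := by omega
  have hm0 : 0 < m := by omega
  have hbn : b ≤ n := by omega
  have hbm : b * m = a * n := by rw [hb, mul_comm]; exact ha.symm
  have ham : a ≤ m := by nlinarith
  have hkey : (n - b) * m = (m - a) * n := by
    have h1 : (m - a) * n = m * n - a * n := by rw [Nat.sub_mul]
    have h2 : (n - b) * m = n * m - b * m := by rw [Nat.sub_mul]
    rw [h2, h1, hbm, Nat.mul_comm n m]
  refine ⟨(Finset.univ : Finset (Fin n × Fin m)).filter
    (fun e => (e.1.val + n - e.2.val * n / m) % n < b), ?_, ?_, ?_⟩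
  · -- degrees in the larger class
    intro u
    have hcount := aux_deg_u n m a b hm hmn hbn hbm ham hkey u
    rw [← hcount]
    apply Finset.card_bij (fun e _ => e.2)
    · intro e he
      simp only [Finset.mem_filter, Finset.mem_univ, true_and] at he ⊢
      rw [← he.2]
      exact he.1
    · intro e he e' he' h
      simp only [Finset.mem_filter, Finset.mem_univ, true_and] at he he'
      have h1 : e.1 = e'.1 := by rw [he.2, he'.2]
      exact Prod.ext h1 h
    · intro v hv
      simp only [Finset.mem_filter, Finset.mem_univ, true_and] at hv
      exact ⟨(u, v), by simp [Finset.mem_filter, hv], rfl⟩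
  · -- degrees in the smaller class
    intro v
    have hcount := aux_deg_v n b (v.val * n / m) hn hbn (aux_s_lt n m hm0 hn v)
    refine Eq.trans ?_ hcount
    apply Finset.card_bij (fun e _ => e.1)
    · intro e he
      simp only [Finset.mem_filter, Finset.mem_univ, true_and] at he ⊢
      rw [← he.2]
      exact he.1
    · intro e he e' he' h
      simp only [Finset.mem_filter, Finset.mem_univ, true_and] at he he'
      have h2 : e.2 = e'.2 := by rw [he.2, he'.2]
      exact Prod.ext h h2
    · intro u hu
      simp only [Finset.mem_filter, Finset.mem_univ, true_and] at hu
      exact ⟨(u, v), by simp [Finset.mem_filter, hu], rfl⟩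
  · -- criticality via Hall's theorem
    intro U' hU'
    have hall := Finset.all_card_le_biUnion_card_iff_exists_injective
      (fun v : Fin m => U'.filter fun u => (u.val + n - v.val * n / m) % n < b)
    obtain ⟨f, hfinj, hf⟩ := hall.mp (fun S => aux_hall n m b hm hmn hb U' hU' S)
    refine ⟨f, hfinj, fun v => ?_⟩
    have hfv := hf v
    simp only [Finset.mem_filter] at hfv
    refine ⟨hfv.1, ?_⟩
    simp only [Finset.mem_filter, Finset.mem_univ, true_and]
    exact hfv.2
end

section
/- Let n, m, k be positive integers such that 1 < m < n, k = n − m, b = n − m + 1, and a = m·(n−m+1)/n is an integer. Let G₂ be the bipartite graph of Construction 3 with these parameters. Then G₂ is k-critical bipartite: for every subset U' of U with |U'| = m, the induced bipartite subgraph G₂[U',V] contains a perfect matching. -/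
/-!
List `U'` as `u_{i_0} < ⋯ < u_{i_{m-1}}` and let `g t = ⌈t·m/n⌉`, so that the neighbours of `u_t`
are `v_{g t}, …, v_{g t + a - 1}` (indices mod `m`). The defect `d j = j - g (i j)` varies by
less than `a`: for `j ≤ j'` the chosen indices satisfy `j' - j ≤ i_{j'} - i_j ≤ n - m + (j' - j)`,
`g` grows at rate `m/n`, and `a·n = (m-1)(n-m) + n`. Hence, with `s = min d`, sending `u_{i_j}` to
`v_{(j - s) mod m}` uses the offset `d j - s < a`, and `j ↦ (j - s) mod m` is a rotation of `V`.
-/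

lemma ceilDiv_mul_bounds {p q : ℕ} (hq : 0 < q) :
    p ≤ ceilDiv p q * q ∧ ceilDiv p q * q < p + q := by
  have hlow := Nat.lt_div_mul_add (a := p + q - 1) hq
  have hup := Nat.div_mul_le_self (p + q - 1) q
  unfold ceilDiv
  omega

def cons3Start (n m t : ℕ) : ℕ := ceilDiv (t * (m / n.gcd m)) (n / n.gcd m)

lemma cons3Start_mul_bounds {n : ℕ} (m t : ℕ) (hn : 0 < n) :
    t * m ≤ cons3Start n m t * n ∧ cons3Start n m t * n < t * m + n := by
  set g := n.gcd m
  have hx : n / g * g = n := Nat.div_mul_cancel (Nat.gcd_dvd_left n m)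
  have hy : m / g * g = m := Nat.div_mul_cancel (Nat.gcd_dvd_right n m)
  have hg : 0 < g := Nat.gcd_pos_of_pos_left m hn
  have hxpos : 0 < n / g := Nat.div_pos (Nat.le_of_dvd hn (Nat.gcd_dvd_left n m)) hg
  obtain ⟨hlow, hup⟩ := ceilDiv_mul_bounds (p := t * (m / g)) hxpos
  constructor
  · calc t * m = t * (m / g) * g := by rw [mul_assoc, hy]
      _ ≤ cons3Start n m t * (n / g) * g := Nat.mul_le_mul_right g hlow
      _ = cons3Start n m t * n := by rw [mul_assoc, hx]
  · calc cons3Start n m t * n = cons3Start n m t * (n / g) * g := by rw [mul_assoc, hx]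
      _ < (t * (m / g) + n / g) * g := Nat.mul_lt_mul_of_pos_right hup hg
      _ = t * m + n := by rw [add_mul, mul_assoc, hy, hx]

section StrictMonoFin

variable {m n : ℕ} {f : Fin m → Fin n}

lemma Fin.val_add_sub_le_of_strictMono (hf : StrictMono f) {j j' : Fin m} (h : j ≤ j') :
    (f j : ℕ) + (j' - j) ≤ f j' := by
  have hcard := Finset.card_le_card_of_injOn f
    (s := Finset.Icc j j') (t := Finset.Icc (f j) (f j'))
    (fun x hx => by
      simp only [Finset.coe_Icc, Set.mem_Icc] at hx ⊢
      exact ⟨hf.monotone hx.1, hf.monotone hx.2⟩)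
    hf.injective.injOn
  have hfj : f j ≤ f j' := hf.monotone h
  rw [Fin.card_Icc, Fin.card_Icc] at hcard
  rw [Fin.le_def] at h hfj
  omega

lemma Fin.val_le_val_of_strictMono (hf : StrictMono f) (j : Fin m) : (j : ℕ) ≤ f j := by
  have := Fin.val_add_sub_le_of_strictMono hf (j := ⟨0, j.pos⟩) (j' := j)
    (Fin.le_def.2 (Nat.zero_le _))
  simp only at this
  omega

lemma Fin.val_add_le_of_strictMono (hf : StrictMono f) (j : Fin m) : (f j : ℕ) + m ≤ n + j := by
  have hlast : m - 1 < m := Nat.sub_lt j.pos Nat.one_pos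
  have hgap := Fin.val_add_sub_le_of_strictMono hf (j := j) (j' := ⟨m - 1, hlast⟩)
    (Fin.le_def.2 (by simp only; omega))
  have := (f ⟨m - 1, hlast⟩).isLt
  simp only at hgap
  omega

end StrictMonoFin

lemma defect_sub_lt {n m a : ℕ} (hmn : m ≤ n) (ha : a * n = m * (n - m + 1)) (G : ℕ → ℕ)
    (hG : ∀ t, t * m ≤ G t * n ∧ G t * n < t * m + n) {i : Fin m → Fin n} (hi : StrictMono i)
    (j j' : Fin m) : ((j : ℤ) - G (i j)) - ((j' : ℤ) - G (i j')) < a := by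
  have hn : (0 : ℤ) < n := by have := j.isLt; omega
  have ha' : (a : ℤ) * n = (m - 1) * (n - m) + n := by
    have := ha; zify [hmn] at this; linarith
  have hjm : (j : ℤ) < m := by exact_mod_cast j.isLt
  have hmn' : (m : ℤ) ≤ n := by exact_mod_cast hmn
  obtain ⟨hlow, hup⟩ := hG (i j)
  obtain ⟨hlow', hup'⟩ := hG (i j')
  zify at hlow hup hlow' hup'
  refine lt_of_mul_lt_mul_right ?_ hn.le
  rw [ha']
  rcases le_or_gt j' j with h | h
  · have hgap := Fin.val_add_sub_le_of_strictMono hi h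
    zify [Fin.le_def.1 h] at hgap
    linarith [mul_le_mul_of_nonneg_right (by linarith : (j : ℤ) - j' ≤ (i j : ℕ) - (i j' : ℕ))
        (by positivity : (0 : ℤ) ≤ m),
      mul_le_mul_of_nonneg_right (by linarith : (j : ℤ) - j' ≤ m - 1)
        (by linarith : (0 : ℤ) ≤ n - m)]
  · have hlow_j := Fin.val_le_val_of_strictMono hi j
    have hup_j' := Fin.val_add_le_of_strictMono hi j'
    have hjj' : (j : ℤ) + 1 ≤ j' := by exact_mod_cast Fin.lt_def.1 h
    zify at hlow_j hup_j'
    linarith [mul_le_mul_of_nonneg_right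
        (by linarith : ((i j' : ℕ) : ℤ) - (i j : ℕ) ≤ n - m + j' - j) (by positivity : (0 : ℤ) ≤ m),
      mul_nonneg (by linarith : (0 : ℤ) ≤ j' - j - 1) (by linarith : (0 : ℤ) ≤ n - m)]

lemma exists_injective_cyclic_matching {m a : ℕ} [NeZero m] (g : Fin m → ℕ)
    (hspread : ∀ j j' : Fin m, ((j : ℤ) - g j) - ((j' : ℤ) - g j') < a) :
    ∃ τ : Fin m → Fin m, Function.Injective τ ∧ ∀ v, ∃ α < a, (g (τ v) + α) % m = v := by
  obtain ⟨j₀, -, hj₀⟩ :=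
    Finset.univ.exists_min_image (fun j : Fin m => (j : ℤ) - g j) Finset.univ_nonempty
  set s : ℤ := (j₀ : ℤ) - g j₀
  let c : Fin m := ⟨(s : ZMod m).val, ZMod.val_lt _⟩
  refine ⟨(· + c), add_left_injective c, fun v => ?_⟩
  set j := v + c
  have hα : s ≤ (j : ℤ) - g j := hj₀ j (Finset.mem_univ _)
  refine ⟨((j : ℤ) - g j - s).toNat, by have := hspread j j₀; omega, ?_⟩
  have hsum : ((g j + ((j : ℤ) - g j - s).toNat : ℕ) : ℤ) = j - s := by push_cast; omega
  have hj : ((j : ℕ) : ZMod m) = v + s := by simp [j, c, Fin.val_add]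
  rw [← ZMod.val_natCast, ← ZMod.val_natCast_of_lt v.isLt, ← Int.cast_natCast, hsum]
  push_cast
  rw [hj, add_sub_cancel_right]

theorem stmt_18_general (n m a : ℕ) (hm : 1 < m) (hmn : m < n)
    (ha : a * n = m * (n - m + 1)) :
    IsKCriticalBipartite n m (cons3Adj n m a) := by
  have : NeZero m := ⟨by omega⟩
  intro U' hU'
  let i := U'.orderEmbOfFin hU'
  obtain ⟨τ, hτ, hadj⟩ := exists_injective_cyclic_matching (a := a) (fun j => cons3Start n m (i j))
    (defect_sub_lt hmn.le ha (cons3Start n m) (fun t => cons3Start_mul_bounds m t (by omega))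
      i.strictMono)
  exact ⟨fun v => i (τ v), i.injective.comp hτ, fun v => ⟨U'.orderEmbOfFin_mem hU' _, hadj v⟩⟩

/-- **Theorem (main_positive, constructive form).** Let `n, m, k` be positive integers such
that `1 < m < n`, `k = n − m`, `b = n − m + 1`, and `a = m·(n−m+1)/n` is an integer.
Then the graph `G₂` of Construction 3 is `k`-critical bipartite: for every subset `U'` of
`U` with `|U'| = m`, the induced bipartite subgraph `G₂[U',V]` has a perfect matching. -/
theorem stmt_18 (n m k a b : ℕ) (hm : 1 < m) (hmn : m < n)
    (hk : k = n - m) (hb : b = n - m + 1) (ha : a * n = m * (n - m + 1)) :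
    IsKCriticalBipartite n m (cons3Adj n m a) :=
  stmt_18_general n m a hm hmn ha
end

section
/- Let n, m, k be positive integers with n > m > 1 and k = n − m, and let G = (U,V;E) be a bipartite graph of order (n,m) that is k-critical bipartite. Then every vertex of V has degree at least n − m + 1, and consequently |E| ≥ m·(n−m+1). -/
/-- **Lower bound.** Let `n, m, k` be positive integers with `n > m > 1` and `k = n − m`,
and let `G = (U,V;E)` be a bipartite graph of order `(n,m)` that is `k`-critical bipartite.
Then every vertex of `V` has degree at least `n − m + 1`, and consequently
`|E| ≥ m·(n−m+1)`. -/
theorem stmt_19 (n m k : ℕ) (hm : 1 < m) (hmn : m < n) (hk : k = n - m)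
    (E : Finset (Fin n × Fin m))
    (hcrit : IsKCriticalBipartite n m (fun u v => (u, v) ∈ E)) :
    (∀ v : Fin m, n - m + 1 ≤ (E.filter (fun e => e.2 = v)).card) ∧
    m * (n - m + 1) ≤ E.card := by
  have hdeg : ∀ v : Fin m, n - m + 1 ≤ (E.filter (fun e => e.2 = v)).card := by
    intro v
    by_contra hlt
    push_neg at hlt
    have hle : (E.filter (fun e => e.2 = v)).card ≤ n - m := by omega
    -- neighborhood of v
    set N : Finset (Fin n) := (E.filter (fun e => e.2 = v)).image Prod.fst with hN
    have hNcard : N.card ≤ n - m :=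
      le_trans (Finset.card_image_le) hle
    have hcompl : m ≤ Nᶜ.card := by
      have := Finset.card_compl N
      have hN' : N.card ≤ n := le_trans hNcard (Nat.sub_le n m)
      simp only [Fintype.card_fin] at this
      omega
    obtain ⟨U', hU'sub, hU'card⟩ := Finset.exists_subset_card_eq hcompl
    obtain ⟨f, hfinj, hf⟩ := hcrit U' hU'card
    obtain ⟨hmem, hadj⟩ := hf v
    have : f v ∈ N := by
      apply Finset.mem_image.mpr
      exact ⟨(f v, v), Finset.mem_filter.mpr ⟨hadj, rfl⟩, rfl⟩
    have := hU'sub hmem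
    simp [Finset.mem_compl] at this
    exact this ‹f v ∈ N›
  refine ⟨hdeg, ?_⟩
  have hsum : E.card = ∑ v : Fin m, (E.filter (fun e => e.2 = v)).card := by
    exact Finset.card_eq_sum_card_fiberwise (fun e _ => Finset.mem_univ e.2)
  calc m * (n - m + 1) = ∑ _v : Fin m, (n - m + 1) := by
        simp [Finset.sum_const, Nat.mul_comm]
    _ ≤ ∑ v : Fin m, (E.filter (fun e => e.2 = v)).card :=
        Finset.sum_le_sum (fun v _ => hdeg v)
    _ = E.card := hsum.symm
end
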